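/- arXiv:1601.02521 — 11 statements merged into one kernel-verified Lean document; each statement's English description precedes it below -/
import Mathlib

section
/- Let j : K → L be the inclusion of a sieve of posets (K is a downward closed subposet of L) and let f : K → X be a monotone map of posets. Define Y to be the set (L \ K) ⊔ X with the relation given by the order of L \ K on L \ K, the order of X on X, and, for x ∈ X and y ∈ L \ K, x ≤ y if and only if there exists w ∈ K with x ≤ f(w) in X and w ≤ y in L (and no relations y ≤ x for y ∈ L \ K, x ∈ X). Then this relation is a partial order on Y, the inclusion k : X → Y and the map g : L → Y (given by f on K and the identity on L \ K) are monotone, the square g ∘ j = k ∘ f commutes, and this square is a pushout square in the category of partial orders and monotone maps. -/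
universe u v w

def IsSieve {α : Type*} [PartialOrder α] (A : Set α) : Prop :=
  ∀ ⦃x y : α⦄, x ≤ y → y ∈ A → x ∈ A

/-- The underlying type `(L \ K) ⊔ X` of the explicit pushout. -/
def PushY {L : Type u} (K : Set L) (X : Type v) : Type (max u v) :=
  {l : L // l ∉ K} ⊕ X

def pushLE {L : Type u} [PartialOrder L] (K : Set L) {X : Type v} [PartialOrder X]
    (f : K → X) : PushY K X → PushY K X → Prop
  | Sum.inl y₁, Sum.inl y₂ => y₁.1 ≤ y₂.1
  | Sum.inl _, Sum.inr _ => False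
  | Sum.inr x, Sum.inl y => ∃ w : K, x ≤ f w ∧ (w : L) ≤ y.1
  | Sum.inr x₁, Sum.inr x₂ => x₁ ≤ x₂

open Classical in
/-- The map `g : L → Y` of the pushout square. -/
noncomputable def pushG {L : Type u} (K : Set L) {X : Type v} (f : K → X) (l : L) :
    PushY K X :=
  if h : l ∈ K then Sum.inr (f ⟨l, h⟩) else Sum.inl ⟨l, h⟩

section PushY

variable {L : Type u} {X : Type v} {K : Set L} {f : K → X} {Z : Type w}

theorem pushG_of_mem {l : L} (h : l ∈ K) : pushG K f l = Sum.inr (f ⟨l, h⟩) :=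
  dif_pos h

theorem pushG_of_notMem {l : L} (h : l ∉ K) : pushG K f l = Sum.inl ⟨l, h⟩ :=
  dif_neg h

theorem pushG_coe (w : K) : pushG K f (w : L) = Sum.inr (f w) :=
  pushG_of_mem w.2

variable (K f) in
theorem pushLE_isPartialOrder [PartialOrder L] [PartialOrder X] :
    IsPartialOrder (PushY K X) (pushLE K f) where
  refl
    | .inl y => le_refl y.1
    | .inr x => le_refl x
  trans
    | .inl _, .inl _, .inl _, h₁, h₂ => le_trans (α := L) h₁ h₂
    | .inr _, .inl _, .inl _, ⟨w, hxw, hwy⟩, h₂ => ⟨w, hxw, hwy.trans h₂⟩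
    | .inr _, .inr _, .inl _, h₁, ⟨w, hxw, hwy⟩ => ⟨w, le_trans h₁ hxw, hwy⟩
    | .inr _, .inr _, .inr _, h₁, h₂ => le_trans (α := X) h₁ h₂
  antisymm
    | .inl _, .inl _, h₁, h₂ => congrArg Sum.inl (Subtype.ext (le_antisymm h₁ h₂))
    | .inr _, .inr _, h₁, h₂ => congrArg Sum.inr (le_antisymm h₁ h₂)

theorem pushLE_pushG_of_le [PartialOrder L] [PartialOrder X] (hK : IsSieve K) (hf : Monotone f)
    {l₁ l₂ : L} (h : l₁ ≤ l₂) :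
    pushLE K f (pushG K f l₁) (pushG K f l₂) := by
  by_cases h₂ : l₂ ∈ K
  · have h₁ : l₁ ∈ K := hK h h₂
    rw [pushG_of_mem h₁, pushG_of_mem h₂]
    exact hf (Subtype.mk_le_mk.mpr h)
  · by_cases h₁ : l₁ ∈ K
    · rw [pushG_of_mem h₁, pushG_of_notMem h₂]
      exact ⟨⟨l₁, h₁⟩, le_rfl, h⟩
    · rw [pushG_of_notMem h₁, pushG_of_notMem h₂]
      exact h

def pushLift (u : L → Z) (v : X → Z) : PushY K X → Z :=
  Sum.elim (fun y => u y.1) v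

theorem pushLift_le_of_pushLE [PartialOrder L] [PartialOrder X] [PartialOrder Z]
    {u : L → Z} {v : X → Z} (hu : Monotone u) (hv : Monotone v)
    (huv : ∀ w : K, u w = v (f w)) :
    ∀ a b : PushY K X, pushLE K f a b → pushLift u v a ≤ pushLift u v b
  | .inl _, .inl _, h => hu h
  | .inr x, .inl y, ⟨w, hxw, hwy⟩ =>
    calc v x ≤ v (f w) := hv hxw
      _ = u w := (huv w).symm
      _ ≤ u y.1 := hu hwy
  | .inr _, .inr _, h => hv h

theorem pushLift_pushG {u : L → Z} {v : X → Z} (huv : ∀ w : K, u w = v (f w)) (l : L) :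
    pushLift u v (pushG K f l) = u l := by
  by_cases h : l ∈ K
  · rw [pushG_of_mem h]
    exact (huv ⟨l, h⟩).symm
  · rw [pushG_of_notMem h]
    rfl

theorem eq_pushLift {u : L → Z} {v : X → Z} {t : PushY K X → Z}
    (htu : ∀ l : L, t (pushG K f l) = u l) (htv : ∀ x : X, t (Sum.inr x) = v x) :
    t = pushLift u v := by
  funext a
  rcases a with y | x
  · exact (congrArg t (pushG_of_notMem y.2)).symm.trans (htu y.1)
  · exact htv x

end PushY

theorem statement0 {L : Type u} [PartialOrder L] {X : Type v} [PartialOrder X]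
    (K : Set L) (hK : IsSieve K) (f : K → X) (hf : Monotone f) :
    -- the relation is a partial order
    IsPartialOrder (PushY K X) (pushLE K f) ∧
    -- the inclusion `k : X → Y` is monotone
    (∀ x₁ x₂ : X, x₁ ≤ x₂ → pushLE K f (Sum.inr x₁) (Sum.inr x₂)) ∧
    -- the map `g : L → Y` is monotone
    (∀ l₁ l₂ : L, l₁ ≤ l₂ → pushLE K f (pushG K f l₁) (pushG K f l₂)) ∧
    -- the square commutes: `g ∘ j = k ∘ f`
    (∀ w : K, pushG K f (w : L) = Sum.inr (f w)) ∧
    -- the square is a pushout in the category of partial orders and monotone maps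
    (∀ (Z : Type w) [PartialOrder Z] (u : L → Z) (v : X → Z),
      Monotone u → Monotone v → (∀ w : K, u (w : L) = v (f w)) →
      ∃! t : PushY K X → Z,
        (∀ a b : PushY K X, pushLE K f a b → t a ≤ t b) ∧
        (∀ l : L, t (pushG K f l) = u l) ∧
        (∀ x : X, t (Sum.inr x) = v x)) := by
  refine ⟨pushLE_isPartialOrder K f, fun _ _ h => h,
    fun _ _ => pushLE_pushG_of_le hK hf, pushG_coe, ?_⟩
  intro Z _ u v hu hv huv
  refine ⟨pushLift u v,
    ⟨pushLift_le_of_pushLE hu hv huv, pushLift_pushG huv, fun _ => rfl⟩, ?_⟩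
  rintro t ⟨-, htu, htv⟩
  exact eq_pushLift htu htv
end

section
/- Let j : K → L be a Dwyer map of posets, with factorization data a cosieve S of L with K ⊆ S and a monotone map r : S → K satisfying r(k) = k for all k ∈ K and r(s) ≤ s for all s ∈ S, and let f : K → X be a monotone map. In the explicit pushout Y, for x ∈ X and y ∈ L \ K one has x ≤ y in Y if and only if y ∈ S and x ≤ f(r(y)) in X. -/
/-!
Statement 1: for a Dwyer map `j : K → L` of posets with factorization data a
cosieve `S ⊇ K` and a retraction `r : S → K`, and a monotone map `f : K → X`,
in the explicit pushout `Y` one has, for `x ∈ X` and `y ∈ L \ K`: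
`x ≤ y` iff `y ∈ S` and `x ≤ f (r y)`.
-/

universe u v

/-- A cosieve in a poset: an upward closed subset. -/
def IsCosieve {α : Type*} [PartialOrder α] (A : Set α) : Prop :=
  ∀ ⦃x y : α⦄, x ≤ y → x ∈ A → y ∈ A

theorem statement1 {L : Type u} [PartialOrder L] {X : Type v} [PartialOrder X]
    (K : Set L) (hK : IsSieve K) (f : K → X) (hf : Monotone f)
    -- Dwyer factorization data: a cosieve `S` with `K ⊆ S` and a monotone
    -- retraction `r : S → K` with `r k = k` on `K` and `r s ≤ s` on `S`
    (S : Set L) (hKS : K ⊆ S) (hS : IsCosieve S)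
    (r : S → K) (hr : Monotone r)
    (hrid : ∀ (k : L) (hk : k ∈ K), (r ⟨k, hKS hk⟩ : L) = k)
    (hrle : ∀ s : S, (r s : L) ≤ (s : L)) :
    ∀ (x : X) (y : {l : L // l ∉ K}),
      pushLE K f (Sum.inr x) (Sum.inl y) ↔
        ∃ hy : y.1 ∈ S, x ≤ f (r ⟨y.1, hy⟩) := by
  intro x y
  constructor
  · rintro ⟨w, hxw, hwy⟩
    have hyS : y.1 ∈ S := hS hwy (hKS w.2)
    refine ⟨hyS, le_trans hxw ?_⟩
    apply hf
    have := hr (a := ⟨w.1, hKS w.2⟩) (b := ⟨y.1, hyS⟩) hwy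
    have hw : (r ⟨w.1, hKS w.2⟩ : L) = w.1 := hrid w.1 w.2
    exact Subtype.coe_le_coe.mp (hw ▸ this)
  · rintro ⟨hy, hx⟩
    exact ⟨r ⟨y.1, hy⟩, hx, hrle _⟩
end

section
/- Let j : K → L be a Dwyer map of posets and f : K → X a monotone map, and let Y be the explicit pushout of j along f. Then the inclusion k : X → Y is a Dwyer map. -/
/-!
Statement 2: if `j : K → L` is a Dwyer map of posets and `f : K → X` is monotone,
then in the explicit pushout `Y` the inclusion `k : X → Y` is a Dwyer map.
(The pushout is given by the explicit relation `pushLE`; the statement is phrased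
for any poset `Y` order-isomorphic to the explicit pushout.)
-/

universe u v w

/-- The inclusion of a subset `A` of a poset is a Dwyer map: `A` is a sieve and
there is a cosieve `T ⊇ A` and a monotone retraction `r : T → A` with `r a = a`
for `a ∈ A` and `r t ≤ t` for `t ∈ T`. -/
def IsDwyerIncl {α : Type*} [PartialOrder α] (A : Set α) : Prop :=
  IsSieve A ∧ ∃ T : Set α, A ⊆ T ∧ IsCosieve T ∧
    ∃ r : T → α, Monotone r ∧ (∀ t : T, r t ∈ A) ∧
      (∀ t : T, (t : α) ∈ A → r t = (t : α)) ∧ (∀ t : T, r t ≤ (t : α))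

/-!
The cosieve of `Y` is `(T \ K) ⊔ X`, where `T ⊇ K` is the cosieve of the Dwyer structure on
`K ⊆ L`, and the retraction onto `X` is the identity on `X` and `f ∘ r` on `T \ K`, where
`r : T → K` is the retraction of `L`. Monotonicity across the two summands holds because
`x ≤ y` with `x ∈ X` and `y ∈ L \ K` is witnessed by some `w ∈ K` with `w ≤ y`, and `r` fixes `w`.
-/

theorem IsDwyerIncl.preimage_orderIso {α β : Type*} [PartialOrder α] [PartialOrder β]
    (e : α ≃o β) {A : Set β} (hA : IsDwyerIncl A) : IsDwyerIncl (e ⁻¹' A) := by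
  obtain ⟨hsieve, T, hAT, hT, r, hr, hrA, hr_id, hr_le⟩ := hA
  refine ⟨fun x y hxy hy => hsieve (e.monotone hxy) hy, e ⁻¹' T, Set.preimage_mono hAT,
    fun x y hxy hx => hT (e.monotone hxy) hx, fun s => e.symm (r ⟨e s, s.2⟩),
    fun s t hst => e.symm.monotone (hr (e.monotone hst)), fun s => ?_, fun s hs => ?_,
    fun s => e.symm_apply_le.mpr (hr_le ⟨e s, s.2⟩)⟩
  · simpa only [Set.mem_preimage, e.apply_symm_apply] using hrA ⟨e s, s.2⟩
  · exact (congrArg e.symm (hr_id ⟨e s, s.2⟩ hs)).trans (e.symm_apply_apply s)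

namespace PushY

variable {L : Type u} {X : Type v} {K : Set L}

def cosieve (K : Set L) (X : Type v) (T : Set L) : Set (PushY K X)
  | Sum.inl z => (z : L) ∈ T
  | Sum.inr _ => True

def retraction (f : K → X) {T : Set L} (r : T → K) : cosieve K X T → X
  | ⟨Sum.inl z, hz⟩ => f (r ⟨z, hz⟩)
  | ⟨Sum.inr x, _⟩ => x

variable [PartialOrder L] [PartialOrder X] {f : K → X} [PartialOrder (PushY K X)]
  (hle : ∀ a b : PushY K X, pushLE K f a b ↔ a ≤ b)
include hle

theorem isSieve_range_inr : IsSieve (α := PushY K X) (Set.range Sum.inr) := by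
  rintro (z | x) _ hxy ⟨y, rfl⟩
  · exact ((hle _ _).mpr hxy).elim
  · exact ⟨x, rfl⟩

theorem isCosieve_cosieve {T : Set L} (hKT : K ⊆ T) (hT : IsCosieve T) :
    IsCosieve (cosieve K X T) := by
  rintro p (z | x) hpq hp
  · rcases p with z' | x'
    · exact hT ((hle _ _).mpr hpq) hp
    · obtain ⟨w, -, hwz⟩ := (hle _ _).mpr hpq
      exact hT hwz (hKT w.2)
  · trivial

theorem monotone_retraction (hf : Monotone f) {T : Set L} (hKT : K ⊆ T) {r : T → K}
    (hr : Monotone r) (hr_id : ∀ w : K, r ⟨w, hKT w.2⟩ = w) :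
    Monotone (retraction f r) := by
  rintro ⟨zp | xp, hp⟩ ⟨zq | xq, hq⟩ hpq <;> have hpq' := (hle _ _).mpr hpq
  · exact hf (hr hpq')
  · exact hpq'.elim
  · obtain ⟨w, hxw, hwz⟩ := hpq'
    calc xp ≤ f w := hxw
      _ = f (r ⟨w, hKT w.2⟩) := by rw [hr_id]
      _ ≤ f (r ⟨zq, hq⟩) := hf (hr hwz)
  · exact hpq'

theorem isDwyerIncl_range_inr (hf : Monotone f) {T : Set L} (hKT : K ⊆ T) (hT : IsCosieve T)
    {r : T → K} (hr : Monotone r) (hr_id : ∀ w : K, r ⟨w, hKT w.2⟩ = w)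
    (hr_le : ∀ t : T, (r t : L) ≤ t) :
    IsDwyerIncl (α := PushY K X) (Set.range Sum.inr) := by
  refine ⟨isSieve_range_inr hle, cosieve K X T, ?_, isCosieve_cosieve hle hKT hT,
    fun t => Sum.inr (retraction f r t), fun s t hst => (hle _ _).mp ?_, fun t => ⟨_, rfl⟩,
    ?_, ?_⟩
  · rintro _ ⟨x, rfl⟩
    trivial
  · exact monotone_retraction hle hf hKT hr hr_id hst
  · rintro ⟨_, _⟩ ⟨x, rfl⟩
    rfl
  · rintro ⟨z | x, hp⟩ <;> refine (hle _ _).mp ?_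
    · exact ⟨r ⟨z, hp⟩, le_rfl, hr_le _⟩
    · exact le_rfl (a := x)

end PushY

theorem statement2 {L : Type u} [PartialOrder L] {X : Type v} [PartialOrder X]
    (K : Set L) (hK : IsDwyerIncl K) (f : K → X) (hf : Monotone f)
    -- `Y` is any poset realizing the explicit pushout of `j` along `f`
    (Y : Type w) [PartialOrder Y] (e : PushY K X ≃ Y)
    (he : ∀ a b : PushY K X, pushLE K f a b ↔ e a ≤ e b) :
    -- the inclusion `k : X → Y` is a Dwyer map
    IsDwyerIncl (Set.range fun x : X => e (Sum.inr x)) := by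
  obtain ⟨-, T, hKT, hT, r, hr, hrK, hr_id, hr_le⟩ := hK
  let _ : PartialOrder (PushY K X) := PartialOrder.lift e e.injective
  let eo : PushY K X ≃o Y := ⟨e, Iff.rfl⟩
  have hX : IsDwyerIncl (α := PushY K X) (Set.range Sum.inr) :=
    PushY.isDwyerIncl_range_inr he hf hKT hT (r := fun t => ⟨r t, hrK t⟩) (fun _ _ h => hr h)
      (fun w => Subtype.ext (hr_id ⟨w, hKT w.2⟩ w.2)) hr_le
  have hrange : Set.range (fun x => e (Sum.inr x)) = eo.symm ⁻¹' Set.range Sum.inr := by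
    ext y
    exact exists_congr fun x => e.eq_symm_apply.symm
  rw [hrange]
  exact hX.preimage_orderIso eo.symm
end

section
/- Let G be a group and let k : K → L be a Dwyer G-map of G-posets. Then for every subgroup H ≤ G, the induced inclusion K^H → L^H of H-fixed subposets is a Dwyer map of posets. -/
/-!
Statement 4: if `k : K → L` is a Dwyer G-map of G-posets, then for every
subgroup `H ≤ G` the induced inclusion `K^H → L^H` of `H`-fixed subposets is a
Dwyer map of posets.
-/

universe u

/-- The inclusion of a G-stable subset `A` of a G-poset is a Dwyer G-map: `A` is
a G-stable sieve and there is a G-stable cosieve `T ⊇ A` and an equivariant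
monotone retraction `r : T → A` with `r a = a` for `a ∈ A` and `r t ≤ t` for
`t ∈ T`. -/
def IsDwyerGIncl (G : Type*) [Group G] {α : Type*} [PartialOrder α]
    [MulAction G α] (A : Set α) : Prop :=
  IsSieve A ∧ (∀ (g : G) (x : α), x ∈ A → g • x ∈ A) ∧
    ∃ T : Set α, A ⊆ T ∧ IsCosieve T ∧ (∀ (g : G) (x : α), x ∈ T → g • x ∈ T) ∧
      ∃ r : T → α, Monotone r ∧ (∀ t : T, r t ∈ A) ∧
        (∀ t : T, (t : α) ∈ A → r t = (t : α)) ∧ (∀ t : T, r t ≤ (t : α)) ∧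
        (∀ (g : G) (t : T) (h : g • (t : α) ∈ T), r ⟨g • (t : α), h⟩ = g • r t)

theorem statement4 {G : Type*} [Group G]
    {L : Type u} [PartialOrder L] [MulAction G L]
    (hLact : ∀ g : G, Monotone fun l : L => g • l)
    (K : Set L) (hK : IsDwyerGIncl G K) :
    ∀ H : Subgroup G,
      IsDwyerIncl {l : {l : L // ∀ h : H, (h : G) • l = l} | (l : L) ∈ K} := by
  intro H
  obtain ⟨hsieve, hKstab, T, hKT, hcos, hTstab, r, hmono, hrA, hrid, hrle, hequiv⟩ := hK
  refine ⟨fun x y hxy hy => hsieve hxy hy, ?_⟩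
  refine ⟨{l | (l : L) ∈ T}, fun l hl => hKT hl, fun x y hxy hx => hcos hxy hx, ?_⟩
  have hfix : ∀ (t : {l : {l : L // ∀ h : H, (h : G) • l = l} | (l : L) ∈ T})
      (h : H), (h : G) • r ⟨(t : {l : L // ∀ h : H, (h : G) • l = l}), t.2⟩
        = r ⟨(t : {l : L // ∀ h : H, (h : G) • l = l}), t.2⟩ := by
    intro t h
    have ht : ((h : G) • ((t : {l : L // ∀ h : H, (h : G) • l = l}) : L)) ∈ T := by
      rw [(t : {l : L // ∀ h : H, (h : G) • l = l}).2 h]; exact t.2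
    have := hequiv (h : G) ⟨_, t.2⟩ ht
    rw [← this]
    congr 1
    exact Subtype.ext ((t : {l : L // ∀ h : H, (h : G) • l = l}).2 h)
  refine ⟨fun t => ⟨r ⟨_, t.2⟩, fun h => hfix t h⟩, ?_, ?_, ?_, ?_⟩
  · intro a b hab
    exact hmono (show ((⟨_, a.2⟩ : T) : L) ≤ ((⟨_, b.2⟩ : T) : L) from hab)
  · intro t; exact hrA ⟨_, t.2⟩
  · intro t ht
    exact Subtype.ext (hrid ⟨_, t.2⟩ ht)
  · intro t; exact hrle ⟨_, t.2⟩
end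

section
/- Let G be a group, H ≤ G a subgroup, and j : K → L a Dwyer map of posets. Equip G/H × K with the partial order in which (aH, k) ≤ (bH, k') if and only if aH = bH and k ≤ k', and with the G-action g • (aH, k) = (gaH, k); equip G/H × L similarly. Then the map id × j : G/H × K → G/H × L is a Dwyer G-map. -/
/-!
Statement 5: for a subgroup `H ≤ G` and a Dwyer map `j : K → L` of posets, the
map `id × j : G/H × K → G/H × L` is a Dwyer G-map, where `G/H × L` carries the
order `(aH, k) ≤ (bH, k') ↔ aH = bH ∧ k ≤ k'` and the action `g • (aH, k) = (gaH, k)`.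
-/

universe u

/-- The product `G/H × L` of the discrete G-set `G/H` with a poset `L`. -/
def OrbProd (G : Type*) [Group G] (H : Subgroup G) (L : Type u) : Type _ :=
  (G ⧸ H) × L

/-- The order on `G/H × L`: `(aH, k) ≤ (bH, k')` iff `aH = bH` and `k ≤ k'`. -/
instance (G : Type*) [Group G] (H : Subgroup G) (L : Type u) [PartialOrder L] :
    PartialOrder (OrbProd G H L) where
  le p q := p.1 = q.1 ∧ p.2 ≤ q.2
  le_refl p := ⟨rfl, le_refl _⟩
  le_trans p q s hpq hqs := ⟨hpq.1.trans hqs.1, hpq.2.trans hqs.2⟩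
  le_antisymm p q hpq hqp := Prod.ext hpq.1 (le_antisymm hpq.2 hqp.2)

/-- The G-action on `G/H × L`: `g • (aH, k) = (gaH, k)`. -/
instance (G : Type*) [Group G] (H : Subgroup G) (L : Type u) :
    MulAction G (OrbProd G H L) where
  smul g p := (g • p.1, p.2)
  one_smul p := Prod.ext (one_smul G p.1) rfl
  mul_smul g g' p := Prod.ext (mul_smul g g' p.1) rfl

theorem statement5 {G : Type*} [Group G] (H : Subgroup G)
    {L : Type u} [PartialOrder L] (K : Set L) (hK : IsDwyerIncl K) :
    IsDwyerGIncl G {p : OrbProd G H L | p.2 ∈ K} := by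
  obtain ⟨hsieve, T, hKT, hcos, r, hmono, hrK, hrid, hrle⟩ := hK
  refine ⟨fun x y hle hy => hsieve hle.2 hy, fun g x hx => hx, ?_⟩
  refine ⟨{p : OrbProd G H L | p.2 ∈ T}, fun p hp => hKT hp, 
    fun x y hle hx => hcos hle.2 hx, fun g x hx => hx, ?_⟩
  refine ⟨fun t => (t.1.1, r ⟨t.1.2, t.2⟩), ?_, fun t => hrK _, 
    fun t ht => Prod.ext rfl (hrid _ ht), fun t => ⟨rfl, hrle _⟩, 
    fun g t h => Prod.ext rfl rfl⟩
  intro a b hab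
  exact ⟨hab.1, hmono hab.2⟩
end

section
/- Let G be a group, let j : K → L be a Dwyer G-map of G-posets, and let f : K → X be a G-equivariant monotone map of G-posets. Let Y be the explicit pushout of j along f, with its induced G-action. Then the inclusion k : X → Y is a Dwyer G-map. -/
/-!
`X` is a Dwyer subposet of the pushout through the cosieve `(S \ K) ⊔ X` and the pushout of
`f ∘ r`: the retraction that fixes `X` and sends `y ∈ S \ K` to `f (r y)`. Each required
property follows, summand by summand, from the same property of `r` and the monotonicity and
equivariance of `f`; for the mixed relation `x ≤ y` (`x ∈ X`, `y ∈ L \ K`) one uses its witness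
`w ∈ K`, fixed by `r`, to get `x ≤ f w = f (r w) ≤ f (r y)`.
-/

universe u v w

/-- The G-action on the explicit pushout induced by the actions on `L \ K`
(which is G-stable since `K` is) and on `X`. -/
def pushSMul {G : Type*} [Group G] {L : Type u} {X : Type v}
    [MulAction G L] [MulAction G X] (K : Set L)
    (hKstab : ∀ (g : G) (l : L), l ∈ K → g • l ∈ K) (g : G) :
    PushY K X → PushY K X
  | Sum.inl y => Sum.inl ⟨g • y.1, fun h => y.2 (by
      have := hKstab g⁻¹ _ h
      simpa using this)⟩
  | Sum.inr x => Sum.inr (g • x)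

theorem isDwyerGIncl_image_of_equiv {G P Y : Type*} [Group G] [PartialOrder Y] [MulAction G Y]
    {R : P → P → Prop} {σ : G → P → P} (e : P ≃ Y)
    (he : ∀ a b, R a b ↔ e a ≤ e b) (heqv : ∀ g a, e (σ g a) = g • e a)
    {A T : Set P} (hA : ∀ ⦃a b⦄, R a b → b ∈ A → a ∈ A) (hAσ : ∀ g a, a ∈ A → σ g a ∈ A)
    (hAT : A ⊆ T) (hT : ∀ ⦃a b⦄, R a b → a ∈ T → b ∈ T) (hTσ : ∀ g a, a ∈ T → σ g a ∈ T)
    {ρ : P → P} (hρ_mono : ∀ ⦃a b⦄, a ∈ T → b ∈ T → R a b → R (ρ a) (ρ b))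
    (hρA : ∀ a ∈ T, ρ a ∈ A) (hρ_id : ∀ a ∈ A, ρ a = a) (hρ_le : ∀ a ∈ T, R (ρ a) a)
    (hρσ : ∀ g, ∀ a ∈ T, ρ (σ g a) = σ g (ρ a)) :
    IsDwyerGIncl G (e '' A) := by
  have hle (b c : Y) : b ≤ c ↔ R (e.symm b) (e.symm c) := by simp [he]
  have hsymm (g : G) (b : Y) : e.symm (g • b) = σ g (e.symm b) :=
    e.symm_apply_eq.2 (by rw [heqv, e.apply_symm_apply])
  simp only [IsDwyerGIncl, e.image_eq_preimage_symm]
  refine ⟨fun b c hbc hc => hA ((hle b c).1 hbc) hc,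
    fun g b hb => by simpa [Set.mem_preimage, hsymm] using hAσ g _ hb,
    e.symm ⁻¹' T, Set.preimage_mono hAT, fun b c hbc hb => hT ((hle b c).1 hbc) hb,
    fun g b hb => by simpa [Set.mem_preimage, hsymm] using hTσ g _ hb,
    fun t => e (ρ (e.symm t)), fun s t hst => ?_, fun t => ?_, fun t ht => ?_, fun t => ?_,
    fun g t _ => ?_⟩
  · simpa [hle] using hρ_mono s.2 t.2 ((hle s t).1 hst)
  · simpa using hρA _ t.2
  · simp [hρ_id _ ht]
  · simpa [hle] using hρ_le _ t.2
  · simp [hsymm, hρσ g _ t.2, heqv]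

def pushCosieve {L : Type u} (K S : Set L) (X : Type v) : Set (PushY K X) :=
  {a | Sum.elim (fun y => y.1 ∈ S) (fun _ => True) a}

open Classical in
noncomputable def pushRetraction {L : Type u} {X : Type v} (K S : Set L) (r : S → K) (f : K → X) :
    PushY K X → PushY K X
  | Sum.inl y => if h : y.1 ∈ S then Sum.inr (f (r ⟨y.1, h⟩)) else Sum.inl y
  | Sum.inr x => Sum.inr x

section Pushout

variable {G : Type*} [Group G] {L : Type u} {X : Type v} {K S : Set L} {r : S → K} {f : K → X}

@[simp]
theorem inr_mem_pushCosieve {x : X} : (Sum.inr x : PushY K X) ∈ pushCosieve K S X :=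
  trivial

theorem pushRetraction_inl {y : {l : L // l ∉ K}} (h : y.1 ∈ S) :
    pushRetraction K S r f (Sum.inl y) = Sum.inr (f (r ⟨y.1, h⟩)) :=
  dif_pos h

@[simp]
theorem pushRetraction_inr {x : X} :
    pushRetraction K S r f (Sum.inr x) = Sum.inr x :=
  rfl

theorem pushRetraction_mem_range_inr {a : PushY K X} (ha : a ∈ pushCosieve K S X) :
    pushRetraction K S r f a ∈ Set.range Sum.inr := by
  rcases a with y | x
  · exact ⟨_, (pushRetraction_inl ha).symm⟩
  · exact ⟨x, rfl⟩

variable [MulAction G L] [MulAction G X]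

theorem pushSMul_mem_pushCosieve (hKstab : ∀ (g : G) (l : L), l ∈ K → g • l ∈ K)
    (hSstab : ∀ (g : G) (l : L), l ∈ S → g • l ∈ S) (g : G) {a : PushY K X}
    (ha : a ∈ pushCosieve K S X) : pushSMul K hKstab g a ∈ pushCosieve K S X := by
  rcases a with y | x
  · exact hSstab g _ ha
  · trivial

theorem pushRetraction_pushSMul (hKstab : ∀ (g : G) (l : L), l ∈ K → g • l ∈ K)
    (hSstab : ∀ (g : G) (l : L), l ∈ S → g • l ∈ S)
    (hfr : ∀ (g : G) (s : S), f (r ⟨g • s, hSstab g s s.2⟩) = g • f (r s))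
    (g : G) {a : PushY K X} (ha : a ∈ pushCosieve K S X) :
    pushRetraction K S r f (pushSMul K hKstab g a) =
      pushSMul K hKstab g (pushRetraction K S r f a) := by
  rcases a with y | x
  · rw [pushRetraction_inl ha]
    exact (pushRetraction_inl (hSstab g _ ha)).trans (congrArg Sum.inr (hfr g ⟨y, ha⟩))
  · rfl

variable [PartialOrder L] [PartialOrder X]

theorem mem_range_inr_of_pushLE ⦃a b : PushY K X⦄ (hab : pushLE K f a b)
    (hb : b ∈ Set.range Sum.inr) : a ∈ Set.range Sum.inr := by
  obtain ⟨x, rfl⟩ := hb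
  rcases a with y | x'
  · exact hab.elim
  · exact ⟨x', rfl⟩

theorem pushCosieve_upward (hKS : K ⊆ S) (hS : IsCosieve S) ⦃a b : PushY K X⦄
    (hab : pushLE K f a b) (ha : a ∈ pushCosieve K S X) : b ∈ pushCosieve K S X := by
  rcases a with y | x <;> rcases b with y' | x'
  · exact hS hab ha
  · trivial
  · obtain ⟨w, -, hwy'⟩ := hab
    exact hS hwy' (hKS w.2)
  · trivial

theorem pushLE_pushRetraction_self (hrle : ∀ s : S, (r s : L) ≤ s) {a : PushY K X}
    (ha : a ∈ pushCosieve K S X) : pushLE K f (pushRetraction K S r f a) a := by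
  rcases a with y | x
  · rw [pushRetraction_inl ha]
    exact ⟨r ⟨y.1, ha⟩, le_rfl, hrle _⟩
  · exact le_rfl (a := x)

theorem pushLE_pushRetraction (hKS : K ⊆ S) (hr : Monotone r)
    (hrid : ∀ w : K, r ⟨w, hKS w.2⟩ = w) (hf : Monotone f) ⦃a b : PushY K X⦄
    (ha : a ∈ pushCosieve K S X) (hb : b ∈ pushCosieve K S X) (hab : pushLE K f a b) :
    pushLE K f (pushRetraction K S r f a) (pushRetraction K S r f b) := by
  rcases a with y | x <;> rcases b with y' | x'
  · rw [pushRetraction_inl ha, pushRetraction_inl hb]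
    exact hf (hr hab)
  · exact hab.elim
  · obtain ⟨w, hxw, hwy'⟩ := hab
    rw [pushRetraction_inr, pushRetraction_inl hb]
    calc x ≤ f w := hxw
      _ = f (r ⟨w, hKS w.2⟩) := by rw [hrid]
      _ ≤ f (r ⟨y', hb⟩) := hf (hr hwy')
  · exact hab

end Pushout

theorem statement6_general {G : Type*} [Group G]
    {L : Type u} [PartialOrder L] [MulAction G L]
    {X : Type v} [PartialOrder X] [MulAction G X]
    (K : Set L)
    (hKstab : ∀ (g : G) (l : L), l ∈ K → g • l ∈ K)
    -- the Dwyer G-map data for `j : K → L`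
    (S : Set L) (hKS : K ⊆ S) (hS : IsCosieve S)
    (hSstab : ∀ (g : G) (l : L), l ∈ S → g • l ∈ S)
    (r : S → K) (hr : Monotone r)
    (hrid : ∀ (k : L) (hk : k ∈ K), (r ⟨k, hKS hk⟩ : L) = k)
    (hrle : ∀ s : S, (r s : L) ≤ (s : L))
    (hreqv : ∀ (g : G) (s : S), (r ⟨g • (s : L), hSstab g s s.2⟩ : L) = g • (r s : L))
    -- `f : K → X` is an equivariant monotone map
    (f : K → X) (hf : Monotone f)
    (hfeqv : ∀ (g : G) (w : K), f ⟨g • (w : L), hKstab g w w.2⟩ = g • f w)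
    -- `Y` is any G-poset realizing the explicit pushout with its induced action
    (Y : Type w) [PartialOrder Y] [MulAction G Y] (e : PushY K X ≃ Y)
    (he : ∀ a b : PushY K X, pushLE K f a b ↔ e a ≤ e b)
    (heqv : ∀ (g : G) (a : PushY K X), e (pushSMul K hKstab g a) = g • e a) :
    -- the inclusion `k : X → Y` is a Dwyer G-map
    IsDwyerGIncl G (Set.range fun x : X => e (Sum.inr x)) := by
  have hfr (g : G) (s : S) : f (r ⟨g • s, hSstab g s s.2⟩) = g • f (r s) := by
    rw [← hfeqv]
    exact congrArg f (Subtype.ext (hreqv g s))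
  change IsDwyerGIncl G (Set.range (e ∘ Sum.inr))
  rw [Set.range_comp e (Sum.inr : X → PushY K X)]
  exact isDwyerGIncl_image_of_equiv e he heqv
    mem_range_inr_of_pushLE (by rintro g _ ⟨x, rfl⟩; exact ⟨g • x, rfl⟩)
    (by rintro _ ⟨x, rfl⟩; exact inr_mem_pushCosieve) (pushCosieve_upward hKS hS)
    (fun g _ => pushSMul_mem_pushCosieve hKstab hSstab g)
    (pushLE_pushRetraction hKS hr (fun w => Subtype.ext (hrid w w.2)) hf)
    (fun _ => pushRetraction_mem_range_inr) (by rintro _ ⟨x, rfl⟩; rfl)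
    (fun _ => pushLE_pushRetraction_self hrle)
    (fun g _ => pushRetraction_pushSMul hKstab hSstab hfr g)

theorem statement6 {G : Type*} [Group G]
    {L : Type u} [PartialOrder L] [MulAction G L]
    (hLact : ∀ g : G, Monotone fun l : L => g • l)
    {X : Type v} [PartialOrder X] [MulAction G X]
    (hXact : ∀ g : G, Monotone fun x : X => g • x)
    (K : Set L) (hK : IsSieve K)
    (hKstab : ∀ (g : G) (l : L), l ∈ K → g • l ∈ K)
    -- the Dwyer G-map data for `j : K → L`
    (S : Set L) (hKS : K ⊆ S) (hS : IsCosieve S)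
    (hSstab : ∀ (g : G) (l : L), l ∈ S → g • l ∈ S)
    (r : S → K) (hr : Monotone r)
    (hrid : ∀ (k : L) (hk : k ∈ K), (r ⟨k, hKS hk⟩ : L) = k)
    (hrle : ∀ s : S, (r s : L) ≤ (s : L))
    (hreqv : ∀ (g : G) (s : S), (r ⟨g • (s : L), hSstab g s s.2⟩ : L) = g • (r s : L))
    -- `f : K → X` is an equivariant monotone map
    (f : K → X) (hf : Monotone f)
    (hfeqv : ∀ (g : G) (w : K), f ⟨g • (w : L), hKstab g w w.2⟩ = g • f w)
    -- `Y` is any G-poset realizing the explicit pushout with its induced action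
    (Y : Type w) [PartialOrder Y] [MulAction G Y] (e : PushY K X ≃ Y)
    (he : ∀ a b : PushY K X, pushLE K f a b ↔ e a ≤ e b)
    (heqv : ∀ (g : G) (a : PushY K X), e (pushSMul K hKstab g a) = g • e a) :
    -- the inclusion `k : X → Y` is a Dwyer G-map
    IsDwyerGIncl G (Set.range fun x : X => e (Sum.inr x)) :=
  statement6_general K hKstab S hKS hS hSstab r hr hrid hrle hreqv f hf hfeqv Y e he heqv
end

section
/- Let j : B → Y be a Dwyer map of posets and let f : A → X be a monotone map of posets which is a retract of j in the arrow category: there exist monotone maps i₁ : A → B, i₂ : X → Y, p₁ : B → A, p₂ : Y → X with p₁ ∘ i₁ = id_A, p₂ ∘ i₂ = id_X, j ∘ i₁ = i₂ ∘ f, and f ∘ p₁ = p₂ ∘ j. Then f is a Dwyer map. -/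
/-- A monotone map of posets is a Dwyer map if it is an order embedding whose
image is a subposet whose inclusion is a Dwyer map. -/
def IsDwyerMap {α β : Type*} [PartialOrder α] [PartialOrder β] (f : α → β) : Prop :=
  (∀ a a' : α, a ≤ a' ↔ f a ≤ f a') ∧ IsDwyerIncl (Set.range f)

theorem statement7 {A X B Y : Type*} [PartialOrder A] [PartialOrder X]
    [PartialOrder B] [PartialOrder Y]
    (j : B → Y) (hj : IsDwyerMap j) (hjmono : Monotone j)
    (f : A → X) (hf : Monotone f)
    (i₁ : A → B) (i₂ : X → Y) (p₁ : B → A) (p₂ : Y → X)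
    (hi₁ : Monotone i₁) (hi₂ : Monotone i₂) (hp₁ : Monotone p₁) (hp₂ : Monotone p₂)
    (hretr₁ : ∀ a, p₁ (i₁ a) = a) (hretr₂ : ∀ x, p₂ (i₂ x) = x)
    (hsq₁ : ∀ a, j (i₁ a) = i₂ (f a)) (hsq₂ : ∀ b, f (p₁ b) = p₂ (j b)) :
    IsDwyerMap f := by
  obtain ⟨hjemb, hjsieve, T', hT'sub, hT'cos, r', hr'mono, hr'mem, hr'id, hr'le⟩ := hj
  refine ⟨?_, ?_, {x | i₂ x ∈ T'}, ?_, ?_, fun t => p₂ (r' ⟨i₂ t, t.2⟩), ?_, ?_, ?_, ?_⟩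
  · intro a a'
    constructor
    · exact fun h => hf h
    · intro h
      have h1 : i₂ (f a) ≤ i₂ (f a') := hi₂ h
      rw [← hsq₁, ← hsq₁] at h1
      have h2 := hp₁ ((hjemb _ _).mpr h1)
      rwa [hretr₁, hretr₁] at h2
  · rintro x y hxy ⟨a, rfl⟩
    have h1 : i₂ x ≤ j (i₁ a) := by rw [hsq₁]; exact hi₂ hxy
    obtain ⟨b, hb⟩ := hjsieve h1 ⟨i₁ a, rfl⟩
    exact ⟨p₁ b, by rw [hsq₂, hb, hretr₂]⟩
  · rintro x ⟨a, rfl⟩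
    exact hT'sub ⟨i₁ a, hsq₁ a⟩
  · intro x y hxy hx
    exact hT'cos (hi₂ hxy) hx
  · intro s t hst
    exact hp₂ (hr'mono (hi₂ hst))
  · intro t
    obtain ⟨b, hb⟩ := hr'mem ⟨i₂ t, t.2⟩
    exact ⟨p₁ b, by rw [hsq₂, hb]⟩
  · rintro ⟨x, hx⟩ ⟨a, rfl⟩
    have h1 : r' ⟨i₂ (f a), hx⟩ = i₂ (f a) := hr'id _ ⟨i₁ a, hsq₁ a⟩
    simp only [h1, hretr₂]
  · intro t
    calc p₂ (r' ⟨i₂ t, t.2⟩) ≤ p₂ (i₂ t) := hp₂ (hr'le _)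
      _ = t := hretr₂ _
end

section
/- If f : A → B and g : B → C are Dwyer maps of posets, then the composite g ∘ f : A → C is a Dwyer map. -/
theorem statement8 {A B C : Type*} [PartialOrder A] [PartialOrder B] [PartialOrder C]
    (f : A → B) (g : B → C) (hf : IsDwyerMap f) (hg : IsDwyerMap g) :
    IsDwyerMap (g ∘ f) := by
  obtain ⟨femb, fsieve, Tf, hATf, hTfcos, rf, rfmono, rfmem, rffix, rfle⟩ := hf
  obtain ⟨gemb, gsieve, Tg, hBTg, hTgcos, rg, rgmono, rgmem, rgfix, rgle⟩ := hg
  have gmono : Monotone g := fun x y h => (gemb x y).mp h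
  have ginj : ∀ x y : B, g x = g y → x = y := fun x y h =>
    le_antisymm ((gemb x y).mpr h.le) ((gemb y x).mpr h.ge)
  have hφ : ∀ t : Tg, ∃ b : B, g b = rg t := fun t => rgmem t
  let φ : Tg → B := fun t => (hφ t).choose
  have hφspec : ∀ t : Tg, g (φ t) = rg t := fun t => (hφ t).choose_spec
  have φmono : ∀ t t' : Tg, (t : C) ≤ (t' : C) → φ t ≤ φ t' := by
    intro t t' h
    rw [gemb, hφspec, hφspec]
    exact rgmono h
  refine ⟨fun a a' => (femb a a').trans (gemb (f a) (f a')), ?_, ?_⟩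
  · rintro x y hxy ⟨a, ha⟩
    obtain ⟨b, hb⟩ := gsieve hxy ⟨f a, ha⟩
    have hbfa : b ≤ f a := by
      rw [gemb, hb]; exact le_of_le_of_eq hxy ha.symm
    obtain ⟨a', ha'⟩ := fsieve hbfa ⟨a, rfl⟩
    exact ⟨a', by simp only [Function.comp_apply, ha', hb]⟩
  · refine ⟨{c | ∃ h : c ∈ Tg, φ ⟨c, h⟩ ∈ Tf}, ?_, ?_,
      fun t => g (rf ⟨φ ⟨t.1, t.2.choose⟩, t.2.choose_spec⟩), ?_, ?_, ?_, ?_⟩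
    · rintro c ⟨a, rfl⟩
      have hc : g (f a) ∈ Tg := hBTg ⟨f a, rfl⟩
      refine ⟨hc, ?_⟩
      have hb : φ ⟨g (f a), hc⟩ = f a := by
        apply ginj
        rw [hφspec]
        exact rgfix ⟨_, hc⟩ ⟨f a, rfl⟩
      rw [hb]; exact hATf ⟨a, rfl⟩
    · rintro x y hxy ⟨hx, hx'⟩
      have hy : y ∈ Tg := hTgcos hxy hx
      exact ⟨hy, hTfcos (φmono ⟨x, hx⟩ ⟨y, hy⟩ hxy) hx'⟩
    · intro t t' h
      exact gmono (rfmono (φmono _ _ h))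
    · intro t
      obtain ⟨a, ha⟩ := rfmem ⟨φ ⟨t.1, t.2.choose⟩, t.2.choose_spec⟩
      exact ⟨a, by simp only [Function.comp_apply, ha]⟩
    · rintro t ⟨a, ha⟩
      have hb : φ ⟨t.1, t.2.choose⟩ = f a := by
        apply ginj
        rw [hφspec]
        exact (rgfix ⟨t.1, t.2.choose⟩ ⟨f a, ha⟩).trans ha.symm
      have hfa : f a ∈ Tf := hb ▸ t.2.choose_spec
      have : (⟨φ ⟨t.1, t.2.choose⟩, t.2.choose_spec⟩ : Tf) = ⟨f a, hfa⟩ :=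
        Subtype.ext hb
      show g (rf ⟨φ ⟨(t : C), t.2.choose⟩, t.2.choose_spec⟩) = (t : C)
      rw [this, rffix ⟨f a, hfa⟩ ⟨a, rfl⟩]
      exact ha
    · intro t
      calc g (rf ⟨φ ⟨t.1, t.2.choose⟩, t.2.choose_spec⟩)
          ≤ g (φ ⟨t.1, t.2.choose⟩) := gmono (rfle _)
        _ = rg ⟨t.1, t.2.choose⟩ := hφspec _
        _ ≤ t.1 := rgle _
end

section
/- Let X be a poset and let (Cₙ)ₙ∈ℕ be an increasing sequence of subposets of X (each with the induced order) such that ⋃ₙ Cₙ = X and each inclusion Cₙ → Cₙ₊₁ is a Dwyer map. Then the inclusion C₀ → X is a Dwyer map. -/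
/-!
Statement 9: if `X` is the increasing union of subposets `C₀ ⊆ C₁ ⊆ ⋯` and each
inclusion `Cₙ → Cₙ₊₁` is a Dwyer map, then the inclusion `C₀ → X` is a Dwyer map.
-/

universe u

theorem statement9 {X : Type u} [PartialOrder X] (C : ℕ → Set X)
    (hincr : ∀ n, C n ⊆ C (n + 1))
    (hunion : (⋃ n, C n) = Set.univ)
    (hdwyer : ∀ n, IsDwyerIncl {x : ↥(C (n + 1)) | (x : X) ∈ C n}) :
    IsDwyerIncl (C 0) := by
  classical
  have hCmono : ∀ {m n : ℕ}, m ≤ n → C m ⊆ C n := by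
    intro m n h
    induction h with
    | refl => exact Set.Subset.refl _
    | step _ ih => exact ih.trans (hincr _)
  have hmem : ∀ x : X, ∃ n, x ∈ C n := by
    intro x
    have : x ∈ ⋃ n, C n := hunion.symm ▸ Set.mem_univ x
    exact Set.mem_iUnion.mp this
  -- the sieve part
  have hsieve : IsSieve (C 0) := by
    intro x y hxy hy
    obtain ⟨n, hx⟩ := hmem x
    have key : ∀ n, ∀ x : X, x ∈ C n → x ≤ y → x ∈ C 0 := by
      intro n
      induction n with
      | zero => intro x hx _; exact hx
      | succ n ih =>
        intro x hx hxy
        have hyC : y ∈ C (n + 1) := hCmono (Nat.zero_le _) hy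
        have hyn : y ∈ C n := hCmono (Nat.zero_le _) hy
        have : ((⟨x, hx⟩ : ↥(C (n + 1))) : X) ∈ C n :=
          (hdwyer n).1 (x := ⟨x, hx⟩) (y := ⟨y, hyC⟩) (Subtype.mk_le_mk.mpr hxy) hyn
        exact ih x this hxy
    exact key n x hx hxy
  -- extract X-level data from each Dwyer inclusion
  have hdata : ∀ n : ℕ, ∃ (T : Set X) (r : X → X),
      T ⊆ C (n + 1) ∧ C n ⊆ T ∧
      (∀ ⦃x y : X⦄, x ∈ T → y ∈ C (n + 1) → x ≤ y → y ∈ T) ∧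
      (∀ ⦃x y : X⦄, x ∈ T → y ∈ T → x ≤ y → r x ≤ r y) ∧
      (∀ ⦃x : X⦄, x ∈ T → r x ∈ C n) ∧
      (∀ ⦃x : X⦄, x ∈ C n → r x = x) ∧
      (∀ ⦃x : X⦄, x ∈ T → r x ≤ x) := by
    intro n
    obtain ⟨-, T', hAT, hcosT, r', hrmono, hrmem, hrid, hrle⟩ := hdwyer n
    set T : Set X := {x | ∃ h : x ∈ C (n + 1), (⟨x, h⟩ : ↥(C (n + 1))) ∈ T'} with hT
    have memT : ∀ {x : X} (hx : x ∈ C (n + 1)), x ∈ T ↔ (⟨x, hx⟩ : ↥(C (n + 1))) ∈ T' := by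
      intro x hx
      constructor
      · rintro ⟨h, hh⟩; exact hh
      · intro h; exact ⟨hx, h⟩
    refine ⟨T, fun x =>
      if h : ∃ hx : x ∈ C (n + 1), (⟨x, hx⟩ : ↥(C (n + 1))) ∈ T' then
        ((r' ⟨⟨x, h.choose⟩, h.choose_spec⟩ : ↥(C (n + 1))) : X) else x,
      ?_, ?_, ?_, ?_, ?_, ?_, ?_⟩
    · rintro x ⟨h, -⟩; exact h
    · intro x hx
      exact ⟨hincr n hx, hAT hx⟩
    · rintro x y ⟨hx1, hxT⟩ hy hxy
      exact ⟨hy, hcosT (x := ⟨x, hx1⟩) (y := ⟨y, hy⟩) (Subtype.mk_le_mk.mpr hxy) hxT⟩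
    · rintro x y ⟨hx1, hxT⟩ ⟨hy1, hyT⟩ hxy
      have hx' : ∃ hx : x ∈ C (n + 1), (⟨x, hx⟩ : ↥(C (n + 1))) ∈ T' := ⟨hx1, hxT⟩
      have hy' : ∃ hy : y ∈ C (n + 1), (⟨y, hy⟩ : ↥(C (n + 1))) ∈ T' := ⟨hy1, hyT⟩
      dsimp only
      rw [dif_pos hx', dif_pos hy']
      have : (⟨⟨x, hx'.choose⟩, hx'.choose_spec⟩ : ↥T') ≤ ⟨⟨y, hy'.choose⟩, hy'.choose_spec⟩ :=
        Subtype.mk_le_mk.mpr (Subtype.mk_le_mk.mpr hxy)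
      exact Subtype.coe_le_coe.mpr (hrmono this)
    · rintro x ⟨hx1, hxT⟩
      have hx' : ∃ hx : x ∈ C (n + 1), (⟨x, hx⟩ : ↥(C (n + 1))) ∈ T' := ⟨hx1, hxT⟩
      dsimp only
      rw [dif_pos hx']
      exact hrmem _
    · intro x hx
      have hx1 : x ∈ C (n + 1) := hincr n hx
      have hxT : (⟨x, hx1⟩ : ↥(C (n + 1))) ∈ T' := hAT hx
      have hx' : ∃ h : x ∈ C (n + 1), (⟨x, h⟩ : ↥(C (n + 1))) ∈ T' := ⟨hx1, hxT⟩
      dsimp only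
      rw [dif_pos hx']
      have := hrid ⟨⟨x, hx'.choose⟩, hx'.choose_spec⟩ hx
      exact congrArg Subtype.val this
    · rintro x ⟨hx1, hxT⟩
      have hx' : ∃ hx : x ∈ C (n + 1), (⟨x, hx⟩ : ↥(C (n + 1))) ∈ T' := ⟨hx1, hxT⟩
      dsimp only
      rw [dif_pos hx']
      exact Subtype.coe_le_coe.mpr (hrle _)
  choose Tset rfun hTsub hTC hTcos hrmono hrmem hrid hrle using hdata
  -- build the tower of cosieves and retractions
  let V : ℕ → Set X := fun n =>
    Nat.rec (Tset 0) (fun n Vn => {x | x ∈ Tset (n + 1) ∧ rfun (n + 1) x ∈ Vn}) n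
  let ρ : ℕ → X → X := fun n =>
    Nat.rec (rfun 0) (fun n ρn => fun x => ρn (rfun (n + 1) x)) n
  have hV0 : V 0 = Tset 0 := rfl
  have hVs : ∀ n, V (n + 1) = {x | x ∈ Tset (n + 1) ∧ rfun (n + 1) x ∈ V n} := fun n => rfl
  have hρ0 : ∀ x, ρ 0 x = rfun 0 x := fun x => rfl
  have hρs : ∀ n x, ρ (n + 1) x = ρ n (rfun (n + 1) x) := fun n x => rfl
  -- properties of the tower, by induction
  have L : ∀ n : ℕ, V n ⊆ C (n + 1) ∧ C 0 ⊆ V n ∧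
      (∀ ⦃x y : X⦄, x ∈ V n → y ∈ C (n + 1) → x ≤ y → y ∈ V n) ∧
      (∀ ⦃x y : X⦄, x ∈ V n → y ∈ V n → x ≤ y → ρ n x ≤ ρ n y) ∧
      (∀ ⦃x : X⦄, x ∈ V n → ρ n x ∈ C 0) ∧
      (∀ ⦃x : X⦄, x ∈ C 0 → ρ n x = x) ∧
      (∀ ⦃x : X⦄, x ∈ V n → ρ n x ≤ x) := by
    intro n
    induction n with
    | zero =>
      exact ⟨hTsub 0, hTC 0, hTcos 0, hrmono 0, hrmem 0, hrid 0, hrle 0⟩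
    | succ n ih =>
      obtain ⟨ih1, ih2, ih3, ih4, ih5, ih6, ih7⟩ := ih
      refine ⟨?_, ?_, ?_, ?_, ?_, ?_, ?_⟩
      · intro x hx; exact hTsub (n + 1) hx.1
      · intro x hx
        have hx1 : x ∈ C (n + 1) := hCmono (Nat.zero_le _) hx
        refine ⟨hTC (n + 1) hx1, ?_⟩
        rw [hrid (n + 1) hx1]
        exact ih2 hx
      · rintro x y ⟨hxT, hxV⟩ hy hxy
        have hyT : y ∈ Tset (n + 1) := hTcos (n + 1) hxT hy hxy
        refine ⟨hyT, ?_⟩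
        exact ih3 hxV (hrmem (n + 1) hyT) (hrmono (n + 1) hxT hyT hxy)
      · rintro x y ⟨hxT, hxV⟩ ⟨hyT, hyV⟩ hxy
        rw [hρs, hρs]
        exact ih4 hxV hyV (hrmono (n + 1) hxT hyT hxy)
      · rintro x ⟨hxT, hxV⟩
        rw [hρs]
        exact ih5 hxV
      · intro x hx
        have hx1 : x ∈ C (n + 1) := hCmono (Nat.zero_le _) hx
        rw [hρs, hrid (n + 1) hx1]
        exact ih6 hx
      · rintro x ⟨hxT, hxV⟩
        rw [hρs]
        exact le_trans (ih7 hxV) (hrle (n + 1) hxT)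
  -- compatibility of the tower
  have Lstep : ∀ n : ℕ, ∀ ⦃x : X⦄, x ∈ V n → x ∈ V (n + 1) ∧ ρ (n + 1) x = ρ n x := by
    intro n x hx
    have hx1 : x ∈ C (n + 1) := (L n).1 hx
    have hr : rfun (n + 1) x = x := hrid (n + 1) hx1
    refine ⟨⟨hTC (n + 1) hx1, ?_⟩, ?_⟩
    · rw [hr]; exact hx
    · rw [hρs, hr]
  have Lmono : ∀ {m n : ℕ}, m ≤ n → ∀ ⦃x : X⦄, x ∈ V m → x ∈ V n ∧ ρ n x = ρ m x := by
    intro m n h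
    induction h with
    | refl => exact fun x hx => ⟨hx, rfl⟩
    | step _ ih =>
      intro x hx
      obtain ⟨h1, h2⟩ := ih hx
      obtain ⟨h3, h4⟩ := Lstep _ h1
      exact ⟨h3, h4.trans h2⟩
  -- assemble the Dwyer structure
  refine ⟨hsieve, ⋃ n, V n, ?_, ?_, ?_⟩
  · intro x hx
    exact Set.mem_iUnion.mpr ⟨0, (L 0).2.1 hx⟩
  · intro x y hxy hx
    obtain ⟨n, hxV⟩ := Set.mem_iUnion.mp hx
    obtain ⟨m, hyC⟩ := hmem y
    have hxV' : x ∈ V (max n m) := (Lmono (le_max_left n m) hxV).1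
    have hyC' : y ∈ C (max n m + 1) := hCmono (le_trans (le_max_right n m) (Nat.le_succ _)) hyC
    exact Set.mem_iUnion.mpr ⟨max n m, (L (max n m)).2.2.1 hxV' hyC' hxy⟩
  · have hmemU : ∀ t : ↥(⋃ n, V n), ∃ n, (t : X) ∈ V n := fun t => Set.mem_iUnion.mp t.2
    refine ⟨fun t => ρ (hmemU t).choose t, ?_, ?_, ?_, ?_⟩
    · intro s t hst
      set m := (hmemU s).choose with hm
      set n := (hmemU t).choose with hn
      have hsV : (s : X) ∈ V m := (hmemU s).choose_spec
      have htV : (t : X) ∈ V n := (hmemU t).choose_spec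
      obtain ⟨hsV', hs'⟩ := Lmono (le_max_left m n) hsV
      obtain ⟨htV', ht'⟩ := Lmono (le_max_right m n) htV
      calc ρ m s = ρ (max m n) s := hs'.symm
        _ ≤ ρ (max m n) t := (L (max m n)).2.2.2.1 hsV' htV' hst
        _ = ρ n t := ht'
    · intro t
      exact (L _).2.2.2.2.1 (hmemU t).choose_spec
    · intro t ht
      exact (L _).2.2.2.2.2.1 ht
    · intro t
      exact (L _).2.2.2.2.2.2 (hmemU t).choose_spec
end

section
/- Let P be a partial order regarded as a category, and let W, U, V be classes of morphisms of P, encoded as sets of pairs (x, y) with x ≤ y, such that: (a) (x, x) ∈ W for every x ∈ P, and W satisfies the 2-out-of-6 property: whenever w ≤ x ≤ y ≤ z with (w, y) ∈ W and (x, z) ∈ W, then (w, x), (x, y), (y, z), (w, z) ∈ W; (b) U ⊆ W and V ⊆ W; (c) for every (a, b) ∈ U and every c with a ≤ c, the least upper bound b ⊔ c exists in P and (c, b ⊔ c) ∈ U; (d) for every (a, b) ∈ V and every c with c ≤ b, the greatest lower bound a ⊓ c exists in P and (a ⊓ c, c) ∈ V; (e) for every (x, y) ∈ W there exists m with x ≤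 m ≤ y, (x, m) ∈ U and (m, y) ∈ V. Let Q be a connected component of W, i.e., an equivalence class of elements of P under the equivalence relation generated by relating x and y whenever (x, y) ∈ W. Suppose Q contains elements a and b with (a, b) ∈ W such that a is a minimal element of P (there is no z < a) and b is a maximal element of P (there is no z > b). Then there exists c ∈ Q such that for every x ∈ Q, the greatest lower bound of {c, x} exists in P and lies in Q, and the least upper bound of {c, x} exists in P and lies in Q. -/
/-!
Statement 13: for a partial model structure (W, U, V) on a poset P regarded as a
category, a connected component Q of W containing a maximal morphism a → b
contains an element c admitting meets and joins (within Q) with every element of Q.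
-/

universe u

/-- Auxiliary: a reflexive-transitive chain of morphisms of `S`. -/
private lemma st13_chain_le {P : Type u} [PartialOrder P] (S : Set (P × P))
    (hS : ∀ p ∈ S, p.1 ≤ p.2) {u v : P}
    (h : Relation.ReflTransGen (fun x y : P => (x, y) ∈ S) u v) : u ≤ v := by
  induction h with
  | refl => exact le_rfl
  | tail _ h2 ih => exact ih.trans (hS _ h2)

private lemma st13_chain_W {P : Type u} [PartialOrder P] (S W : Set (P × P))
    (hSW : S ⊆ W) (hrefl : ∀ x : P, (x, x) ∈ W)
    (hcomp : ∀ u v w : P, (u, v) ∈ W → (v, w) ∈ W → (u, w) ∈ W) {u v : P}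
    (h : Relation.ReflTransGen (fun x y : P => (x, y) ∈ S) u v) : (u, v) ∈ W := by
  induction h with
  | refl => exact hrefl u
  | tail _ h2 ih => exact hcomp _ _ _ ih (hSW h2)

/-- Pushout of a `U`-chain along a morphism. -/
private lemma st13_chain_push {P : Type u} [PartialOrder P] (U : Set (P × P))
    (hUle : ∀ p ∈ U, p.1 ≤ p.2)
    (hU : ∀ a b : P, (a, b) ∈ U → ∀ c : P, a ≤ c →
      ∃ s : P, IsLUB {b, c} s ∧ (c, s) ∈ U)
    {u v : P} (h : Relation.ReflTransGen (fun x y : P => (x, y) ∈ U) u v) :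
    ∀ c : P, u ≤ c → ∃ t : P, IsLUB {v, c} t ∧
      Relation.ReflTransGen (fun x y : P => (x, y) ∈ U) c t := by
  induction h using Relation.ReflTransGen.head_induction_on with
  | refl =>
    intro c hc
    refine ⟨c, ⟨?_, ?_⟩, Relation.ReflTransGen.refl⟩
    · rintro q (rfl | rfl)
      exacts [hc, le_rfl]
    · intro z hz
      exact hz (Set.mem_insert_of_mem _ rfl)
  | @head a₁ a₂ hstep hrest ih =>
    intro c hc
    obtain ⟨t1, ht1, hct1⟩ := hU a₁ a₂ hstep c hc
    have ha2t1 : a₂ ≤ t1 := ht1.1 (Set.mem_insert _ _)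
    have hct1' : c ≤ t1 := ht1.1 (Set.mem_insert_of_mem _ rfl)
    obtain ⟨t, ht, hchain⟩ := ih t1 ha2t1
    refine ⟨t, ⟨?_, ?_⟩, hchain.head hct1⟩
    · rintro q (rfl | rfl)
      · exact ht.1 (Set.mem_insert _ _)
      · exact hct1'.trans (ht.1 (Set.mem_insert_of_mem _ rfl))
    · intro z hz
      have hvz : v ≤ z := hz (Set.mem_insert _ _)
      have hcz : c ≤ z := hz (Set.mem_insert_of_mem _ rfl)
      have ha2z : a₂ ≤ z := (st13_chain_le U hUle hrest).trans hvz
      have ht1z : t1 ≤ z := by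
        apply ht1.2
        rintro q (rfl | rfl)
        exacts [ha2z, hcz]
      apply ht.2
      rintro q (rfl | rfl)
      exacts [hvz, ht1z]

/-- Pullback of a `V`-chain along a morphism. -/
private lemma st13_chain_pull {P : Type u} [PartialOrder P] (V : Set (P × P))
    (hVle : ∀ p ∈ V, p.1 ≤ p.2)
    (hV : ∀ a b : P, (a, b) ∈ V → ∀ c : P, c ≤ b →
      ∃ i : P, IsGLB {a, c} i ∧ (i, c) ∈ V)
    {u v : P} (h : Relation.ReflTransGen (fun x y : P => (x, y) ∈ V) u v) :
    ∀ c : P, c ≤ v → ∃ i : P, IsGLB {u, c} i ∧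
      Relation.ReflTransGen (fun x y : P => (x, y) ∈ V) i c := by
  induction h with
  | refl =>
    intro c hc
    refine ⟨c, ⟨?_, ?_⟩, Relation.ReflTransGen.refl⟩
    · rintro q (rfl | rfl)
      exacts [hc, le_rfl]
    · intro z hz
      exact hz (Set.mem_insert_of_mem _ rfl)
  | @tail w' v' hrest hstep ih =>
    intro c hc
    obtain ⟨i1, hi1, hi1c⟩ := hV w' v' hstep c hc
    have hi1w : i1 ≤ w' := hi1.1 (Set.mem_insert _ _)
    have hi1c' : i1 ≤ c := hi1.1 (Set.mem_insert_of_mem _ rfl)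
    obtain ⟨i, hi, hchain⟩ := ih i1 hi1w
    refine ⟨i, ⟨?_, ?_⟩, hchain.tail hi1c⟩
    · rintro q (rfl | rfl)
      · exact hi.1 (Set.mem_insert _ _)
      · exact (hi.1 (Set.mem_insert_of_mem _ rfl)).trans hi1c'
    · intro z hz
      have hzu : z ≤ u := hz (Set.mem_insert _ _)
      have hzc : z ≤ c := hz (Set.mem_insert_of_mem _ rfl)
      have hzw : z ≤ w' := hzu.trans (st13_chain_le V hVle hrest)
      have hzi1 : z ≤ i1 := by
        apply hi1.2
        rintro q (rfl | rfl)
        exacts [hzw, hzc]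
      apply hi.2
      rintro q (rfl | rfl)
      exacts [hzu, hzi1]

/-- The invariant carried around the connected component. -/
def st13Phi {P : Type u} [PartialOrder P] (W U V : Set (P × P)) (k : P) (x : P) : Prop :=
  (∃ s : P, IsLUB {k, x} s ∧
      Relation.ReflTransGen (fun u v : P => (u, v) ∈ U) x s ∧ (k, s) ∈ W) ∧
  (∃ i : P, IsGLB {k, x} i ∧
      Relation.ReflTransGen (fun u v : P => (u, v) ∈ V) i x ∧ (i, k) ∈ W)

theorem statement13 {P : Type u} [PartialOrder P]
    (W U V : Set (P × P))
    -- morphisms are encoded as pairs (x, y) with x ≤ y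
    (hWle : ∀ p ∈ W, p.1 ≤ p.2) (hUle : ∀ p ∈ U, p.1 ≤ p.2) (hVle : ∀ p ∈ V, p.1 ≤ p.2)
    -- (a) W contains all objects and satisfies 2-out-of-6
    (hWrefl : ∀ x : P, (x, x) ∈ W)
    (hW26 : ∀ w x y z : P, w ≤ x → x ≤ y → y ≤ z → (w, y) ∈ W → (x, z) ∈ W →
      (w, x) ∈ W ∧ (x, y) ∈ W ∧ (y, z) ∈ W ∧ (w, z) ∈ W)
    -- (b) U and V consist of weak equivalences
    (hUW : U ⊆ W) (hVW : V ⊆ W)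
    -- (c) U is closed under pushouts (= least upper bounds) along morphisms of P
    (hU : ∀ a b : P, (a, b) ∈ U → ∀ c : P, a ≤ c →
      ∃ s : P, IsLUB {b, c} s ∧ (c, s) ∈ U)
    -- (d) V is closed under pullbacks (= greatest lower bounds) along morphisms of P
    (hV : ∀ a b : P, (a, b) ∈ V → ∀ c : P, c ≤ b →
      ∃ i : P, IsGLB {a, c} i ∧ (i, c) ∈ V)
    -- (e) morphisms of W factor as a morphism of U followed by a morphism of V
    (hfact : ∀ a b : P, (a, b) ∈ W → ∃ m : P, a ≤ m ∧ m ≤ b ∧ (a, m) ∈ U ∧ (m, b) ∈ V)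
    -- Q is the connected component of W containing a maximal morphism a → b
    (a b : P) (hab : (a, b) ∈ W)
    (hamin : ∀ z : P, z ≤ a → z = a) (hbmax : ∀ z : P, b ≤ z → z = b)
    (Q : Set P)
    (hQ : Q = {y : P | Relation.EqvGen (fun u v : P => (u, v) ∈ W) a y}) :
    ∃ c ∈ Q, ∀ x ∈ Q,
      (∃ i : P, IsGLB {c, x} i ∧ i ∈ Q) ∧ (∃ s : P, IsLUB {c, x} s ∧ s ∈ Q) := by
  -- basic W calculus
  have Wcomp : ∀ u v w : P, (u, v) ∈ W → (v, w) ∈ W → (u, w) ∈ W := by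
    intro u v w h1 h2
    exact (hW26 u v v w (hWle _ h1) le_rfl (hWle _ h2) h1 h2).2.2.2
  have WleftCancel : ∀ u v w : P, v ≤ w → (u, v) ∈ W → (u, w) ∈ W → (v, w) ∈ W := by
    intro u v w hvw h1 h2
    exact (hW26 u u v w le_rfl (hWle _ h1) hvw h1 h2).2.2.1
  have WrightCancel : ∀ u v w : P, u ≤ v → (u, w) ∈ W → (v, w) ∈ W → (u, v) ∈ W := by
    intro u v w huv h1 h2
    exact (hW26 u v w w huv (hWle _ h2) le_rfl h1 h2).1
  obtain ⟨k, hak, hkb, hUak, hVkb⟩ := hfact a b hab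
  -- forward step of the invariant
  have hfwd : ∀ x y : P, st13Phi W U V k x → (x, y) ∈ W → st13Phi W U V k y := by
    rintro x y ⟨⟨s, hs, hxs, hks⟩, -⟩ hxy
    obtain ⟨m, hxm, hmy, hUxm, hVmy⟩ := hfact x y hxy
    obtain ⟨t1, ht1, hmt1⟩ := st13_chain_push U hUle hU hxs m hxm
    obtain ⟨t2, ht2, hyt2⟩ := st13_chain_push U hUle hU hmt1 y hmy
    have hst1 : s ≤ t1 := ht1.1 (Set.mem_insert _ _)
    have ht1t2 : t1 ≤ t2 := ht2.1 (Set.mem_insert _ _)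
    have hyt2' : y ≤ t2 := ht2.1 (Set.mem_insert_of_mem _ rfl)
    have hks' : k ≤ s := hs.1 (Set.mem_insert _ _)
    have hlubky : IsLUB {k, y} t2 := by
      constructor
      · rintro q (rfl | rfl)
        · exact hks'.trans (hst1.trans ht1t2)
        · exact hyt2'
      · intro z hz
        have hkz : k ≤ z := hz (Set.mem_insert _ _)
        have hyz : y ≤ z := hz (Set.mem_insert_of_mem _ rfl)
        have hsz : s ≤ z := by
          apply hs.2
          rintro q (rfl | rfl)
          exacts [hkz, (hxm.trans hmy).trans hyz]
        have ht1z : t1 ≤ z := by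
          apply ht1.2
          rintro q (rfl | rfl)
          exacts [hsz, hmy.trans hyz]
        apply ht2.2
        rintro q (rfl | rfl)
        exacts [ht1z, hyz]
    have hxsW : (x, s) ∈ W := st13_chain_W U W hUW hWrefl Wcomp hxs
    have hyt2W : (y, t2) ∈ W := st13_chain_W U W hUW hWrefl Wcomp hyt2
    have hxt2W : (x, t2) ∈ W := Wcomp _ _ _ (Wcomp _ _ _ (hUW hUxm) (hVW hVmy)) hyt2W
    have hst2W : (s, t2) ∈ W := WleftCancel x s t2 (hst1.trans ht1t2) hxsW hxt2W
    have hkt2W : (k, t2) ∈ W := Wcomp _ _ _ hks hst2W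
    -- glb part
    obtain ⟨p, hkp, hpt2, hUkp, hVpt2⟩ := hfact k t2 hkt2W
    obtain ⟨s0, hs0, hbs0⟩ := hU k p hUkp b hkb
    have hs0b : s0 = b := hbmax s0 (hUle _ hbs0)
    have hpb : p ≤ b := hs0b ▸ hs0.1 (Set.mem_insert _ _)
    obtain ⟨j, hj, hjy⟩ := hV p t2 hVpt2 y hyt2'
    have hjp : j ≤ p := hj.1 (Set.mem_insert _ _)
    have hjy' : j ≤ y := hj.1 (Set.mem_insert_of_mem _ rfl)
    obtain ⟨w, hw, hwj⟩ := hV k b hVkb j (hjp.trans hpb)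
    have hwk : w ≤ k := hw.1 (Set.mem_insert _ _)
    have hwj' : w ≤ j := hw.1 (Set.mem_insert_of_mem _ rfl)
    have hglbky : IsGLB {k, y} w := by
      constructor
      · rintro q (rfl | rfl)
        exacts [hwk, hwj'.trans hjy']
      · intro z hz
        have hzk : z ≤ k := hz (Set.mem_insert _ _)
        have hzy : z ≤ y := hz (Set.mem_insert_of_mem _ rfl)
        have hzj : z ≤ j := by
          apply hj.2
          rintro q (rfl | rfl)
          exacts [hzk.trans hkp, hzy]
        apply hw.2
        rintro q (rfl | rfl)
        exacts [hzk, hzj]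
    have hwyW : (w, y) ∈ W := Wcomp _ _ _ (hVW hwj) (hVW hjy)
    have hwt2W : (w, t2) ∈ W := Wcomp _ _ _ hwyW hyt2W
    have hwkW : (w, k) ∈ W := WrightCancel w k t2 hwk hwt2W hkt2W
    exact ⟨⟨t2, hlubky, hyt2, hkt2W⟩,
      ⟨w, hglbky, (Relation.ReflTransGen.single hwj).tail hjy, hwkW⟩⟩
  -- backward step of the invariant
  have hbwd : ∀ x y : P, st13Phi W U V k x → (y, x) ∈ W → st13Phi W U V k y := by
    rintro x y ⟨-, ⟨i, hi, hix, hik⟩⟩ hyx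
    obtain ⟨m, hym, hmx, hUym, hVmx⟩ := hfact y x hyx
    obtain ⟨j1, hj1, hj1m⟩ := st13_chain_pull V hVle hV hix m hmx
    obtain ⟨j2, hj2, hj2y⟩ := st13_chain_pull V hVle hV hj1m y hym
    have hj1i : j1 ≤ i := hj1.1 (Set.mem_insert _ _)
    have hj2j1 : j2 ≤ j1 := hj2.1 (Set.mem_insert _ _)
    have hj2y' : j2 ≤ y := hj2.1 (Set.mem_insert_of_mem _ rfl)
    have hik' : i ≤ k := hi.1 (Set.mem_insert _ _)
    have hglbky : IsGLB {k, y} j2 := by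
      constructor
      · rintro q (rfl | rfl)
        exacts [hj2j1.trans (hj1i.trans hik'), hj2y']
      · intro z hz
        have hzk : z ≤ k := hz (Set.mem_insert _ _)
        have hzy : z ≤ y := hz (Set.mem_insert_of_mem _ rfl)
        have hzi : z ≤ i := by
          apply hi.2
          rintro q (rfl | rfl)
          exacts [hzk, hzy.trans (hym.trans hmx)]
        have hzj1 : z ≤ j1 := by
          apply hj1.2
          rintro q (rfl | rfl)
          exacts [hzi, hzy.trans hym]
        apply hj2.2
        rintro q (rfl | rfl)
        exacts [hzj1, hzy]
    have hj2yW : (j2, y) ∈ W := st13_chain_W V W hVW hWrefl Wcomp hj2y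
    have hixW : (i, x) ∈ W := st13_chain_W V W hVW hWrefl Wcomp hix
    have hj2xW : (j2, x) ∈ W := Wcomp _ _ _ hj2yW (Wcomp _ _ _ (hUW hUym) (hVW hVmx))
    have hj2iW : (j2, i) ∈ W := WrightCancel j2 i x (hj2j1.trans hj1i) hj2xW hixW
    have hj2kW : (j2, k) ∈ W := Wcomp _ _ _ hj2iW hik
    -- lub part
    obtain ⟨p, hj2p, hpk, hUj2p, hVpk⟩ := hfact j2 k hj2kW
    obtain ⟨i0, hi0, hi0a⟩ := hV p k hVpk a hak
    have hi0a' : i0 ≤ a := hi0.1 (Set.mem_insert_of_mem _ rfl)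
    have hi0eq : i0 = a := hamin i0 hi0a'
    have hap : a ≤ p := hi0eq ▸ hi0.1 (Set.mem_insert _ _)
    obtain ⟨j, hj, hyj⟩ := hU j2 p hUj2p y hj2y'
    have hpj : p ≤ j := hj.1 (Set.mem_insert _ _)
    have hyj' : y ≤ j := hj.1 (Set.mem_insert_of_mem _ rfl)
    obtain ⟨w, hw, hjw⟩ := hU a k hUak j (hap.trans hpj)
    have hkw : k ≤ w := hw.1 (Set.mem_insert _ _)
    have hjw' : j ≤ w := hw.1 (Set.mem_insert_of_mem _ rfl)
    have hpk' : p ≤ k := hVle _ hVpk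
    have hlubky : IsLUB {k, y} w := by
      constructor
      · rintro q (rfl | rfl)
        exacts [hkw, hyj'.trans hjw']
      · intro z hz
        have hkz : k ≤ z := hz (Set.mem_insert _ _)
        have hyz : y ≤ z := hz (Set.mem_insert_of_mem _ rfl)
        have hjz : j ≤ z := by
          apply hj.2
          rintro q (rfl | rfl)
          exacts [hpk'.trans hkz, hyz]
        apply hw.2
        rintro q (rfl | rfl)
        exacts [hkz, hjz]
    have hywW : (y, w) ∈ W := Wcomp _ _ _ (hUW hyj) (hUW hjw)
    have hj2wW : (j2, w) ∈ W := Wcomp _ _ _ hj2yW hywW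
    have hkwW : (k, w) ∈ W := WleftCancel j2 k w hkw hj2kW hj2wW
    exact ⟨⟨w, hlubky, (Relation.ReflTransGen.single hyj).tail hjw, hkwW⟩,
      ⟨j2, hglbky, hj2y, hj2kW⟩⟩
  -- base point
  have hbase : st13Phi W U V k a := by
    constructor
    · refine ⟨k, ⟨?_, ?_⟩, Relation.ReflTransGen.single hUak, hWrefl k⟩
      · rintro q (rfl | rfl)
        exacts [le_rfl, hak]
      · intro z hz
        exact hz (Set.mem_insert _ _)
    · refine ⟨a, ⟨?_, ?_⟩, Relation.ReflTransGen.refl, hUW hUak⟩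
      · rintro q (rfl | rfl)
        exacts [hak, le_rfl]
      · intro z hz
        exact hz (Set.mem_insert_of_mem _ rfl)
  -- the invariant is constant on components
  have hiff : ∀ u v : P, Relation.EqvGen (fun u v : P => (u, v) ∈ W) u v →
      (st13Phi W U V k u ↔ st13Phi W U V k v) := by
    intro u v h
    induction h with
    | rel u v h => exact ⟨fun hu => hfwd u v hu h, fun hv => hbwd v u hv h⟩
    | refl u => exact Iff.rfl
    | symm u v _ ih => exact ih.symm
    | trans u v w _ _ ih1 ih2 => exact ih1.trans ih2
  subst hQ
  refine ⟨k, Relation.EqvGen.rel a k (hUW hUak), ?_⟩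
  intro x hx
  have hx' : Relation.EqvGen (fun u v : P => (u, v) ∈ W) a x := hx
  obtain ⟨⟨s, hlub, hxs, -⟩, ⟨i, hglb, hix, -⟩⟩ := (hiff a x hx').mp hbase
  constructor
  · exact ⟨i, hglb, Relation.EqvGen.trans _ _ _ hx'
      (Relation.EqvGen.symm _ _
        (Relation.EqvGen.rel i x (st13_chain_W V W hVW hWrefl Wcomp hix)))⟩
  · exact ⟨s, hlub, Relation.EqvGen.trans _ _ _ hx'
      (Relation.EqvGen.rel x s (st13_chain_W U W hUW hWrefl Wcomp hxs))⟩
end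

section
/- Fix n ≥ 0. Let D(n) be the poset whose elements are the nonempty finite chains of nonempty subsets of {0, …, n} (finite nonempty sets of nonempty subsets of {0, …, n} that are totally ordered by strict inclusion), ordered by inclusion of chains, and let B(n) be the subposet of D(n) consisting of those chains that do not contain the full set {0, …, n} as an element; B(n) is a sieve in D(n). Let A be the six-element poset {a₁, a₂, b₁, b₂, c₁, c₂} in which aᵢ < bⱼ and bⱼ < cₖ (hence aᵢ < cₖ) for all i, j, k ∈ {1, 2}, and there are no other strict relations. Then for every poset X, every monotone map f : B(n) → X, and every pushout square in the category of partial orders and monotone maps formed from the inclusion B(n) → D(n) and f, with pushout corner Y: if A is a retract of Y (there are monotone maps i : A → Y and ρ : Y → A with ρ ∘ i = id_A), then A is a retract of X. -/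
/-!
Statement 14: the retract criterion showing the six-element model `A` of the
2-sphere is not cofibrant: for every pushout of a generating cofibration
`Π Sd² ∂Δ[n] → Π Sd² Δ[n]` along a map `f : Π Sd² ∂Δ[n] → X` with pushout
corner `Y`, if `A` is a retract of `Y` then `A` is a retract of `X`.
-/

universe u v

/-- The poset `D(n) = Π Sd² Δ[n]`: nonempty finite chains (under strict
inclusion) of nonempty subsets of `{0, …, n}`, ordered by inclusion of chains. -/
abbrev SdChain (n : ℕ) : Type :=
  {S : Finset (Finset (Fin (n + 1))) //
    S.Nonempty ∧ (∀ T ∈ S, T.Nonempty) ∧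
      IsChain (· ⊂ ·) (S : Set (Finset (Fin (n + 1))))}

/-- The sieve `B(n) = Π Sd² ∂Δ[n]` of chains not containing the full set. -/
def SdBoundary (n : ℕ) : Set (SdChain n) :=
  {S | (Finset.univ : Finset (Fin (n + 1))) ∉ S.1}

/-- The six element poset `A` with `aᵢ < bⱼ < cₖ`, a model of the 2-sphere. -/
inductive A6 : Type
  | a1 | a2 | b1 | b2 | c1 | c2
  deriving DecidableEq

instance : Fintype A6 where
  elems := {.a1, .a2, .b1, .b2, .c1, .c2}
  complete x := by cases x <;> decide

/-- Rank: `a`'s have rank 0, `b`'s rank 1, `c`'s rank 2. -/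
def A6.rank : A6 → ℕ
  | .a1 => 0 | .a2 => 0 | .b1 => 1 | .b2 => 1 | .c1 => 2 | .c2 => 2

/-- The order on `A`: `x ≤ y` iff `x = y` or `rank x < rank y`. -/
instance : PartialOrder A6 where
  le x y := x = y ∨ x.rank < y.rank
  le_refl x := Or.inl rfl
  le_trans a b c hab hbc := by
    rcases hab with rfl | h1
    · exact hbc
    · rcases hbc with rfl | h2
      · exact Or.inr h1
      · exact Or.inr (h1.trans h2)
  le_antisymm a b hab hba := by
    rcases hab with rfl | h1
    · rfl
    · rcases hba with rfl | h2
      · rfl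
      · exact absurd (h1.trans h2) (lt_irrefl _)

/-!
Write `Y = X ∪_{B(n)} D(n)`. Testing the universal property against `Prop`-valued maps shows
that every point of `Y` comes from `X` or from `D(n)`, that `g(D(n) ∖ B(n))` is an up-set on
which the order is that of `D(n)`, and that `k x ≤ g d` iff `x ≤ f b` for some `b ∈ B(n)` below
`d`. Two chains below a common chain have their union as join, so `g(D(n) ∖ B(n))` has the
interpolation property (`u₁, u₂ ≤ v₁, v₂` forces some `w` in between), which `A` lacks at
`b₁, b₂ ≤ c₁, c₂`; a retraction therefore puts `i a₁` and `i a₂` in `k(X)`. For the same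
reason two points of `X` mapping below `y ∈ Y` have an upper bound in `X` still mapping below
`y`, which lets us lift `A` rank by rank to points `x_a` with `k x_a ≤ i a`; then `ρ ∘ k`
retracts `X` onto the image of `a ↦ x_a`.
-/

instance : DecidableRel (α := A6) (· ≤ ·) := fun x y =>
  decidable_of_iff (x = y ∨ x.rank < y.rank) Iff.rfl

section Lifting

variable {A X Y : Type*} [PartialOrder A] [Preorder Y]
  {φ : X → Y} {i : A → Y} {ρ : Y → A}

def IsLiftBelow (φ : X → Y) (i : A → Y) (ρ : Y → A) (a : A) (x : X) : Prop :=
  φ x ≤ i a ∧ ρ (φ x) = a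

theorem IsMin.isLiftBelow (hρ : Monotone ρ) (hretr : ∀ a, ρ (i a) = a) {a : A} (ha : IsMin a)
    {x : X} (hx : φ x ≤ i a) : IsLiftBelow φ i ρ a x :=
  ⟨hx, ha.eq_of_le (hretr a ▸ hρ hx)⟩

theorem IsLiftBelow.exists_isLiftBelow_above [Preorder X] (hφ : Monotone φ) (hi : Monotone i)
    (hρ : Monotone ρ) (hretr : ∀ a, ρ (i a) = a)
    (hdir : ∀ y, DirectedOn (· ≤ ·) (φ ⁻¹' Set.Iic y)) {u₁ u₂ a : A} (hu₁ : u₁ ≤ a)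
    (hu₂ : u₂ ≤ a) (hsand : ∀ w, u₁ ≤ w → u₂ ≤ w → w ≤ a → w = a) {x₁ x₂ : X}
    (h₁ : IsLiftBelow φ i ρ u₁ x₁) (h₂ : IsLiftBelow φ i ρ u₂ x₂) :
    ∃ x, x₁ ≤ x ∧ x₂ ≤ x ∧ IsLiftBelow φ i ρ a x := by
  obtain ⟨x, hxa, hx₁, hx₂⟩ :=
    hdir (i a) x₁ (h₁.1.trans (hi hu₁)) x₂ (h₂.1.trans (hi hu₂))
  refine ⟨x, hx₁, hx₂, hxa, hsand _ ?_ ?_ ?_⟩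
  · exact h₁.2 ▸ hρ (hφ hx₁)
  · exact h₂.2 ▸ hρ (hφ hx₂)
  · exact hretr a ▸ hρ hxa

end Lifting

def InterpolationOn {α : Type*} [LE α] (s : Set α) : Prop :=
  ∀ u₁ ∈ s, ∀ u₂ ∈ s, ∀ v₁ v₂, u₁ ≤ v₁ → u₁ ≤ v₂ → u₂ ≤ v₁ → u₂ ≤ v₂ →
    ∃ w, u₁ ≤ w ∧ u₂ ≤ w ∧ w ≤ v₁ ∧ w ≤ v₂

namespace A6

theorem monotone_of_covBy {X : Type*} [Preorder X] {F : A6 → X}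
    (h₁₁ : F a1 ≤ F b1) (h₁₂ : F a1 ≤ F b2) (h₂₁ : F a2 ≤ F b1) (h₂₂ : F a2 ≤ F b2)
    (g₁₁ : F b1 ≤ F c1) (g₁₂ : F b1 ≤ F c2) (g₂₁ : F b2 ≤ F c1) (g₂₂ : F b2 ≤ F c2) :
    Monotone F := by
  rintro x y (rfl | h)
  · exact le_rfl
  · cases x <;> cases y <;>
      first
        | exact absurd h (by decide)
        | assumption
        | exact h₁₁.trans g₁₁ | exact h₁₁.trans g₁₂ | exact h₂₁.trans g₁₁ | exact h₂₁.trans g₁₂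

theorem not_exists_between_b_c : ¬ ∃ w : A6, b1 ≤ w ∧ b2 ≤ w ∧ w ≤ c1 ∧ w ≤ c2 := by
  decide

variable {X Y : Type*} [Preorder X] [Preorder Y] {i : A6 → Y} {ρ : Y → A6}

theorem exists_monotone_section {φ : X → Y} (hφ : Monotone φ) (hi : Monotone i)
    (hρ : Monotone ρ) (hretr : ∀ a, ρ (i a) = a)
    (hdir : ∀ y, DirectedOn (· ≤ ·) (φ ⁻¹' Set.Iic y))
    (ha₁ : ∃ x, φ x ≤ i a1) (ha₂ : ∃ x, φ x ≤ i a2) :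
    ∃ s : A6 → X, Monotone s ∧ ∀ a, ρ (φ (s a)) = a := by
  obtain ⟨xa₁, la₁⟩ := ha₁
  obtain ⟨xa₂, la₂⟩ := ha₂
  replace la₁ := IsMin.isLiftBelow hρ hretr (by intro b; revert b; decide) la₁
  replace la₂ := IsMin.isLiftBelow hρ hretr (by intro b; revert b; decide) la₂
  have step {u₁ u₂ a : A6} :=
    IsLiftBelow.exists_isLiftBelow_above (u₁ := u₁) (u₂ := u₂) (a := a) hφ hi hρ hretr hdir
  obtain ⟨xb₁, h₁₁, h₂₁, lb₁⟩ := step (a := b1) (by decide) (by decide) (by decide) la₁ la₂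
  obtain ⟨xb₂, h₁₂, h₂₂, lb₂⟩ := step (a := b2) (by decide) (by decide) (by decide) la₁ la₂
  obtain ⟨xc₁, g₁₁, g₂₁, lc₁⟩ := step (a := c1) (by decide) (by decide) (by decide) lb₁ lb₂
  obtain ⟨xc₂, g₁₂, g₂₂, lc₂⟩ := step (a := c2) (by decide) (by decide) (by decide) lb₁ lb₂
  refine ⟨fun | a1 => xa₁ | a2 => xa₂ | b1 => xb₁ | b2 => xb₂ | c1 => xc₁ | c2 => xc₂,
    monotone_of_covBy h₁₁ h₁₂ h₂₁ h₂₂ g₁₁ g₁₂ g₂₁ g₂₂, ?_⟩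
  rintro (_ | _ | _ | _ | _ | _)
  exacts [la₁.2, la₂.2, lb₁.2, lb₂.2, lc₁.2, lc₂.2]

theorem apply_notMem_of_le_b (hi : Monotone i) (hρ : Monotone ρ) (hretr : ∀ a, ρ (i a) = a)
    {U : Set Y} (hU : IsUpperSet U) (hUint : InterpolationOn U) {a : A6} (h₁ : a ≤ b1) (h₂ : a ≤ b2) :
    i a ∉ U := by
  intro ha
  obtain ⟨w, h₁₁, h₂₁, h₁₂, h₂₂⟩ := hUint _ (hU (hi h₁) ha) _ (hU (hi h₂) ha) (i c1) (i c2)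
    (hi (by decide)) (hi (by decide)) (hi (by decide)) (hi (by decide))
  exact not_exists_between_b_c ⟨ρ w, hretr b1 ▸ hρ h₁₁, hretr b2 ▸ hρ h₂₁,
    hretr c1 ▸ hρ h₁₂, hretr c2 ▸ hρ h₂₂⟩

end A6

structure IsPosetPushout {D X Y : Type*} [Preorder D] [Preorder X] [Preorder Y] (B : Set D)
    (f : B → X) (g : D → Y) (k : X → Y) : Prop where
  monotone_g : Monotone g
  monotone_k : Monotone k
  comm : ∀ S : B, g S = k (f S)
  univ : ∀ (Z : Type v) [PartialOrder Z] (u : D → Z) (w : X → Z), Monotone u → Monotone w →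
    (∀ S : B, u S = w (f S)) →
      ∃! t : Y → Z, Monotone t ∧ (∀ d, t (g d) = u d) ∧ ∀ x, t (k x) = w x

namespace IsPosetPushout

variable {D X Y : Type*} [Preorder D] [Preorder X] [PartialOrder Y] {B : Set D}
  {f : B → X} {g : D → Y} {k : X → Y}

theorem exists_antitone_extension (hP : IsPosetPushout.{v} B f g k) {p : D → Prop}
    {q : X → Prop} (hp : Antitone p) (hq : Antitone q) (hpq : ∀ S : B, p S ↔ q (f S)) :
    ∃ t : Y → Prop, Antitone t ∧ (∀ d, t (g d) ↔ p d) ∧ ∀ x, t (k x) ↔ q x := by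
  obtain ⟨t, ht, htg, htk⟩ := (hP.univ (ULift.{v} Propᵒᵈ)
    (fun d => .up (OrderDual.toDual (p d))) (fun x => .up (OrderDual.toDual (q x)))
    (fun _ _ h => hp h) (fun _ _ h => hq h) (fun S => by rw [hpq S])).exists
  let read : ULift.{v} Propᵒᵈ → Prop := fun z => OrderDual.ofDual z.down
  exact ⟨read ∘ t, fun _ _ h => ht h, fun d => (congrArg read (htg d)).to_iff,
    fun x => (congrArg read (htk x)).to_iff⟩

theorem mem_range_or_mem_range (hP : IsPosetPushout.{v} B f g k) (y₀ : Y) :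
    y₀ ∈ Set.range k ∨ y₀ ∈ Set.range g := by
  by_contra! h
  -- `y ↦ (y₀ ≤ y)` and `y ↦ (y₀ < y)` agree on both images, so uniqueness forces `y₀ < y₀`.
  have hlt : ∀ y, y ∈ Set.range k ∨ y ∈ Set.range g → (y₀ ≤ y ↔ y₀ < y) := fun y hy =>
    ⟨fun hle => hle.lt_of_ne (by rintro rfl; tauto), le_of_lt⟩
  have huniq := (hP.univ (ULift.{v} Prop) (fun d => .up (y₀ ≤ g d)) (fun x => .up (y₀ ≤ k x))
    (fun _ _ h h' => h'.trans (hP.monotone_g h)) (fun _ _ h h' => h'.trans (hP.monotone_k h))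
    (fun S => by rw [hP.comm])).unique
    (y₁ := fun y => .up (y₀ ≤ y)) (y₂ := fun y => .up (y₀ < y))
    ⟨fun _ _ h h' => h'.trans h, fun _ => rfl, fun _ => rfl⟩
    ⟨fun _ _ h h' => h'.trans_le h, fun d => by rw [hlt _ (.inr ⟨d, rfl⟩)],
      fun x => by rw [hlt _ (.inl ⟨x, rfl⟩)]⟩
  exact lt_irrefl y₀ ((congrArg ULift.down (congrFun huniq y₀)).mp le_rfl)

theorem mem_range_of_notMem_image_compl (hP : IsPosetPushout.{v} B f g k) {y : Y}
    (hy : y ∉ g '' Bᶜ) : y ∈ Set.range k := by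
  obtain hk | ⟨d, rfl⟩ := hP.mem_range_or_mem_range y
  · exact hk
  · have hd : d ∈ B := by_contra fun hd => hy ⟨d, hd, rfl⟩
    exact ⟨f ⟨d, hd⟩, (hP.comm ⟨d, hd⟩).symm⟩

variable (hP : IsPosetPushout.{v} B f g k) (hf : Monotone f) (hB : IsLowerSet B)
include hP hf hB

theorem exists_antitone_le_k (x₀ : X) : ∃ t : Y → Prop, Antitone t ∧
    (∀ d, t (g d) ↔ ∃ h : d ∈ B, f ⟨d, h⟩ ≤ x₀) ∧ ∀ x, t (k x) ↔ x ≤ x₀ :=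
  hP.exists_antitone_extension
    (fun _ _ h ⟨hd, hle⟩ => ⟨hB h hd, (hf (Subtype.mk_le_mk.mpr h)).trans hle⟩)
    (fun _ _ h hle => h.trans hle) (fun S => ⟨fun ⟨_, hle⟩ => hle, fun hle => ⟨S.2, hle⟩⟩)

theorem exists_antitone_le_g (d₀ : D) : ∃ t : Y → Prop, Antitone t ∧
    (∀ d, t (g d) ↔ d ≤ d₀ ∨ ∃ h : d ∈ B, ∃ b : B, (b : D) ≤ d₀ ∧ f ⟨d, h⟩ ≤ f b) ∧
      ∀ x, t (k x) ↔ ∃ b : B, (b : D) ≤ d₀ ∧ x ≤ f b := by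
  refine hP.exists_antitone_extension ?_ (fun _ _ h ⟨b, hb, hle⟩ => ⟨b, hb, h.trans hle⟩) ?_
  · rintro d d' h (h' | ⟨hd', b, hb, hle⟩)
    · exact .inl (h.trans h')
    · exact .inr ⟨hB h hd', b, hb, (hf (Subtype.mk_le_mk.mpr h)).trans hle⟩
  · refine fun S => ⟨?_, fun ⟨b, hb, hle⟩ => .inr ⟨S.2, b, hb, hle⟩⟩
    rintro (h | ⟨_, b, hb, hle⟩)
    exacts [⟨S, h, le_rfl⟩, ⟨b, hb, hle⟩]

theorem le_of_k_le_k {x x₀ : X} (h : k x ≤ k x₀) : x ≤ x₀ := by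
  obtain ⟨t, ht, -, htk⟩ := exists_antitone_le_k hP hf hB x₀
  exact (htk x).mp (ht h ((htk x₀).mpr le_rfl))

theorem mem_of_g_le_k {d : D} {x₀ : X} (h : g d ≤ k x₀) : d ∈ B := by
  obtain ⟨t, ht, htg, htk⟩ := exists_antitone_le_k hP hf hB x₀
  exact ((htg d).mp (ht h ((htk x₀).mpr le_rfl))).1

theorem exists_le_of_k_le_g {x : X} {d₀ : D} (h : k x ≤ g d₀) :
    ∃ b : B, (b : D) ≤ d₀ ∧ x ≤ f b := by
  obtain ⟨t, ht, htg, htk⟩ := exists_antitone_le_g hP hf hB d₀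
  exact (htk x).mp (ht h ((htg d₀).mpr (.inl le_rfl)))

theorem le_of_g_le_g {d d₀ : D} (h : g d ≤ g d₀) (hd : d ∉ B) : d ≤ d₀ := by
  obtain ⟨t, ht, htg, -⟩ := exists_antitone_le_g hP hf hB d₀
  obtain h' | ⟨hd', -⟩ := (htg d).mp (ht h ((htg d₀).mpr (.inl le_rfl)))
  exacts [h', absurd hd' hd]

theorem exists_le_of_g_le {d : D} {y : Y} (hd : d ∉ B) (h : g d ≤ y) :
    ∃ e, d ≤ e ∧ g e = y := by
  obtain ⟨x, rfl⟩ | ⟨e, rfl⟩ := hP.mem_range_or_mem_range y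
  exacts [absurd (mem_of_g_le_k hP hf hB h) hd, ⟨e, le_of_g_le_g hP hf hB h hd, rfl⟩]

theorem isUpperSet_image_compl : IsUpperSet (g '' Bᶜ) := by
  rintro _ y h ⟨d, hd, rfl⟩
  obtain ⟨e, hde, rfl⟩ := exists_le_of_g_le hP hf hB hd h
  exact ⟨e, fun he => hd (hB hde he), rfl⟩

theorem interpolationOn_image_compl (hD : InterpolationOn (Set.univ : Set D)) :
    InterpolationOn (g '' Bᶜ) := by
  rintro _ ⟨d₁, hd₁, rfl⟩ _ ⟨d₂, hd₂, rfl⟩ y₁ y₂ h₁₁ h₁₂ h₂₁ h₂₂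
  obtain ⟨e₁, -, rfl⟩ := exists_le_of_g_le hP hf hB hd₁ h₁₁
  obtain ⟨e₂, -, rfl⟩ := exists_le_of_g_le hP hf hB hd₁ h₁₂
  obtain ⟨w, h₁, h₂, h₃, h₄⟩ := hD d₁ trivial d₂ trivial e₁ e₂ (le_of_g_le_g hP hf hB h₁₁ hd₁)
    (le_of_g_le_g hP hf hB h₁₂ hd₁) (le_of_g_le_g hP hf hB h₂₁ hd₂)
    (le_of_g_le_g hP hf hB h₂₂ hd₂)
  exact ⟨g w, hP.monotone_g h₁, hP.monotone_g h₂, hP.monotone_g h₃, hP.monotone_g h₄⟩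

theorem directedOn_preimage_Iic (hBdir : ∀ d, DirectedOn (· ≤ ·) (B ∩ Set.Iic d)) (y : Y) :
    DirectedOn (· ≤ ·) (k ⁻¹' Set.Iic y) := by
  intro x₁ hx₁ x₂ hx₂
  obtain ⟨x₀, rfl⟩ | ⟨d, rfl⟩ := hP.mem_range_or_mem_range y
  · exact ⟨x₀, le_refl (k x₀), le_of_k_le_k hP hf hB hx₁, le_of_k_le_k hP hf hB hx₂⟩
  obtain ⟨b₁, hb₁d, hxb₁⟩ := exists_le_of_k_le_g hP hf hB hx₁
  obtain ⟨b₂, hb₂d, hxb₂⟩ := exists_le_of_k_le_g hP hf hB hx₂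
  obtain ⟨b, ⟨hb, hbd⟩, hb₁b, hb₂b⟩ := hBdir d b₁ ⟨b₁.2, hb₁d⟩ b₂ ⟨b₂.2, hb₂d⟩
  refine ⟨f ⟨b, hb⟩, ?_, hxb₁.trans (hf hb₁b), hxb₂.trans (hf hb₂b)⟩
  show k (f ⟨b, hb⟩) ≤ g d
  exact hP.comm ⟨b, hb⟩ ▸ hP.monotone_g hbd

end IsPosetPushout

namespace SdChain

variable {n : ℕ}

theorem le_iff_subset {s t : SdChain n} : s ≤ t ↔ s.1 ⊆ t.1 := Iff.rfl

theorem exists_val_eq_union {s t e : SdChain n} (hs : s ≤ e) (ht : t ≤ e) :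
    ∃ w : SdChain n, w.1 = s.1 ∪ t.1 :=
  ⟨⟨s.1 ∪ t.1, s.2.1.mono Finset.subset_union_left,
    fun T hT => (Finset.mem_union.1 hT).elim (s.2.2.1 T) (t.2.2.1 T),
    e.2.2.2.mono (Finset.coe_subset.2 (Finset.union_subset hs ht))⟩, rfl⟩

theorem interpolationOn_univ : InterpolationOn (Set.univ : Set (SdChain n)) := by
  intro s _ t _ e₁ e₂ hs₁ hs₂ ht₁ ht₂
  obtain ⟨w, hw⟩ := exists_val_eq_union hs₁ ht₁
  refine ⟨w, ?_, ?_, ?_, ?_⟩ <;> rw [le_iff_subset, hw]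
  exacts [Finset.subset_union_left, Finset.subset_union_right,
    Finset.union_subset hs₁ ht₁, Finset.union_subset hs₂ ht₂]

end SdChain

namespace SdBoundary

variable {n : ℕ}

theorem isLowerSet : IsLowerSet (SdBoundary n) :=
  fun _ _ h hs hmem => hs (h hmem)

theorem directedOn_inter_Iic (d : SdChain n) :
    DirectedOn (· ≤ ·) (SdBoundary n ∩ Set.Iic d) := by
  rintro s ⟨hs, hsd⟩ t ⟨ht, htd⟩
  obtain ⟨w, hw⟩ := SdChain.exists_val_eq_union hsd htd
  refine ⟨w, ⟨?_, ?_⟩, ?_, ?_⟩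
  · simpa [SdBoundary, hw] using ⟨hs, ht⟩
  · rw [Set.mem_Iic, SdChain.le_iff_subset, hw]
    exact Finset.union_subset hsd htd
  · exact (SdChain.le_iff_subset.2 (hw ▸ Finset.subset_union_left) :)
  · exact (SdChain.le_iff_subset.2 (hw ▸ Finset.subset_union_right) :)

end SdBoundary

theorem statement14 (n : ℕ) (X : Type u) [PartialOrder X]
    (f : SdBoundary n → X) (hf : Monotone f)
    -- a pushout square of posets formed from the inclusion `B(n) → D(n)` and `f`,
    -- with pushout corner `Y`
    (Y : Type u) [PartialOrder Y] (g : SdChain n → Y) (k : X → Y)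
    (hg : Monotone g) (hk : Monotone k)
    (hcomm : ∀ S : SdBoundary n, g (S : SdChain n) = k (f S))
    (huniv : ∀ (Z : Type v) [PartialOrder Z] (u : SdChain n → Z) (v : X → Z),
      Monotone u → Monotone v → (∀ S : SdBoundary n, u (S : SdChain n) = v (f S)) →
      ∃! t : Y → Z, Monotone t ∧ (∀ d : SdChain n, t (g d) = u d) ∧
        (∀ x : X, t (k x) = v x))
    -- if `A` is a retract of `Y` ...
    (i : A6 → Y) (ρ : Y → A6) (hi : Monotone i) (hρ : Monotone ρ)
    (hretr : ∀ x : A6, ρ (i x) = x) :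
    -- ... then `A` is a retract of `X`
    ∃ (i' : A6 → X) (ρ' : X → A6),
      Monotone i' ∧ Monotone ρ' ∧ ∀ x : A6, ρ' (i' x) = x := by
  have hP : IsPosetPushout.{v} (SdBoundary n) f g k := ⟨hg, hk, hcomm, huniv⟩
  have hB := SdBoundary.isLowerSet (n := n)
  have hbot (a : A6) (h₁ : a ≤ .b1) (h₂ : a ≤ .b2) : ∃ x, k x ≤ i a := by
    have hU := A6.apply_notMem_of_le_b hi hρ hretr (hP.isUpperSet_image_compl hf hB)
      (hP.interpolationOn_image_compl hf hB SdChain.interpolationOn_univ) h₁ h₂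
    obtain ⟨x, hx⟩ := hP.mem_range_of_notMem_image_compl hU
    exact ⟨x, hx.le⟩
  obtain ⟨s, hs, hsρ⟩ := A6.exists_monotone_section hk hi hρ hretr
    (hP.directedOn_preimage_Iic hf hB SdBoundary.directedOn_inter_Iic)
    (hbot .a1 (by decide) (by decide)) (hbot .a2 (by decide) (by decide))
  exact ⟨s, ρ ∘ k, hs, hρ.comp hk, hsρ⟩
end
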